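/- arXiv:1301.2532 — 10 statements merged into one kernel-verified Lean document; each statement's English description precedes it below -/
import Mathlib

section
/- Let e ≥ 1 and k be natural numbers with k < 2^(e-1), and for i ∈ ℕ set T_i = C(2^e+2k+1, i)⁻¹ − C(2k+1, i)⁻¹ ∈ ℚ. Then for every natural number i with 2i+1 ≤ k (i.e., 0 ≤ i ≤ ⌊(k−1)/2⌋), either T_{2i} + T_{2i+1} = 0 or ν(T_{2i} + T_{2i+1}) ≥ e − 2·lg(k+1) + 2·ν(k+1). -/
/-!
Put `z = 2k + 1`, `z' = 2^e + z`, `c = 2i`, `L = lg (k + 1)`, `μ = ν (k + 1)`, `a = C(z, c)` and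
`b = C(z', c)`. From `C(n, c)⁻¹ + C(n, c + 1)⁻¹ = (n + 1) / ((n - c) C(n, c))` we get
`T_c + T_{c+1} = (z' + 1) / (z' - c) · (b⁻¹ - a⁻¹) - 2^e (c + 1) / ((z' - c)(z - c)) · a⁻¹`,
where `z - c` and `z' - c` are odd and `2^(μ+1) ∣ z' + 1`. By Kummer's theorem the carries of
`c + (z - c)` lie in positions `μ + 2, …, L + 1` (the low `μ + 1` binary digits of `z` are `1`),
and adding `2^e` to `z` does not change them, so `ν a, ν b ≤ L - μ`. Each factor of the falling
factorial changes by `(z' - j) / (z - j) = 1 + 2^e / (z - j)` with `ν (z - j) ≤ L + 1`, so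
`ν (b - a) ≥ ν a + e - L - 1`, and the two terms have valuation at least `e - 2L + 2μ`.
-/

open Finset
open scoped Nat

lemma mod_add_mod_sub_lt_of_dvd_succ {z c q : ℕ} (hc : c ≤ z) (hdvd : q ∣ z + 1) :
    c % q + (z - c) % q < q := by
  rcases Nat.lt_or_ge q 2 with hq | hq
  · interval_cases q
    · simp at hdvd
    · simp [Nat.mod_one]
  have hsum := Nat.add_mod_add_ite c (z - c) q
  have hsucc := Nat.add_mod_add_ite z 1 q
  rw [Nat.add_sub_cancel' hc] at hsum
  rw [Nat.mod_eq_zero_of_dvd hdvd, Nat.mod_eq_of_lt hq] at hsucc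
  have := Nat.mod_lt c (by omega : 0 < q)
  have := Nat.mod_lt (z - c) (by omega : 0 < q)
  have := Nat.mod_lt z (by omega : 0 < q)
  split_ifs at hsum hsucc <;> omega

section Padic

variable {p : ℕ} [hp : Fact p.Prime]

lemma padicValNat_choose_le_of_pow_dvd_succ {z c t B : ℕ} (hc : c ≤ z) (ht : p ^ t ∣ z + 1)
    (hz : z < p ^ B) : padicValNat p (z.choose c) ≤ B - 1 - t := by
  rw [padicValNat_choose hc (Nat.lt_succ_of_le (Nat.log_le_self p z))]
  calc #{i ∈ Ico 1 (z + 1) | p ^ i ≤ c % p ^ i + (z - c) % p ^ i}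
      ≤ #(Ico (t + 1) B) := card_le_card fun i hi => ?_
    _ = B - 1 - t := by rw [Nat.card_Ico]; omega
  simp only [mem_filter, mem_Ico] at hi ⊢
  obtain ⟨⟨hi1, -⟩, hcarry⟩ := hi
  constructor
  · by_contra! hit
    have := mod_add_mod_sub_lt_of_dvd_succ hc ((pow_dvd_pow p (by omega : i ≤ t)).trans ht)
    omega
  · refine (Nat.pow_lt_pow_iff_right hp.out.one_lt).1 (lt_of_le_of_lt ?_ hz)
    calc p ^ i ≤ c % p ^ i + (z - c) % p ^ i := hcarry
      _ ≤ c + (z - c) := add_le_add (Nat.mod_le _ _) (Nat.mod_le _ _)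
      _ = z := Nat.add_sub_cancel' hc

lemma padicValNat_choose_pow_add {z c g : ℕ} (hc : c ≤ z) (hz : z < p ^ g) :
    padicValNat p ((p ^ g + z).choose c) = padicValNat p (z.choose c) := by
  have hlog : Nat.log p (p ^ g + z) < g + 1 :=
    Nat.log_lt_of_lt_pow (by have := hp.out.pos; positivity)
      (by rw [pow_succ]; nlinarith [hp.out.two_le, hz])
  rw [padicValNat_choose (by omega) hlog,
    padicValNat_choose hc ((Nat.log_mono_right (by omega)).trans_lt hlog)]
  refine congrArg card (filter_congr fun i hi => ?_)
  obtain ⟨r, hr⟩ : p ^ i ∣ p ^ g := pow_dvd_pow p (Nat.lt_succ_iff.1 (mem_Ico.1 hi).2)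
  rw [show p ^ g + z - c = z - c + p ^ i * r by omega, Nat.add_mul_mod_self_left]

lemma padicNorm_pow_self (g : ℕ) : padicNorm p ((p : ℚ) ^ g) = (p : ℚ) ^ (-(g : ℤ)) := by
  rw [padicNorm.eq_zpow_of_nonzero (pow_ne_zero _ (by exact_mod_cast hp.out.ne_zero)),
    padicValRat.pow, padicValRat.self hp.out.one_lt, mul_one]

lemma zpow_neg_le_padicNorm_natCast {n s : ℕ} (hn : n ≠ 0) (hs : padicValNat p n ≤ s) :
    (p : ℚ) ^ (-(s : ℤ)) ≤ padicNorm p n := by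
  rw [padicNorm.eq_zpow_of_nonzero (by exact_mod_cast hn), padicValRat.of_nat]
  exact zpow_le_zpow_right₀ (by exact_mod_cast hp.out.one_le) (by omega)

lemma eq_zero_or_le_padicValRat_of_padicNorm_le {x : ℚ} {n : ℤ}
    (h : padicNorm p x ≤ (p : ℚ) ^ (-n)) : x = 0 ∨ n ≤ padicValRat p x := by
  refine or_iff_not_imp_left.2 fun hx => ?_
  rw [padicNorm.eq_zpow_of_nonzero hx] at h
  have := (zpow_le_zpow_iff_right₀ (by exact_mod_cast hp.out.one_lt : (1 : ℚ) < p)).1 h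
  omega

lemma padicNorm_inv_sub_inv_le {a b : ℚ} {s d : ℤ} (ha : a ≠ 0)
    (hb : (p : ℚ) ^ (-s) ≤ padicNorm p b)
    (hab : padicNorm p (b - a) ≤ (p : ℚ) ^ d * padicNorm p a) :
    padicNorm p (b⁻¹ - a⁻¹) ≤ (p : ℚ) ^ (s + d) := by
  have hp0 : (0 : ℚ) < p := by exact_mod_cast hp.out.pos
  have hna : 0 < padicNorm p a := lt_of_le_of_ne (padicNorm.nonneg a) (padicNorm.nonzero ha).symm
  have hnb : 0 < padicNorm p b := (zpow_pos hp0 _).trans_le hb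
  have hb0 : b ≠ 0 := fun h => by simp [h] at hnb
  rw [inv_sub_inv hb0 ha, padicNorm.div, padicNorm.mul, ← padicNorm.neg, neg_sub,
    div_le_iff₀ (mul_pos hnb hna), zpow_add₀ hp0.ne']
  calc padicNorm p (b - a) ≤ (p : ℚ) ^ d * padicNorm p a := hab
    _ = (p : ℚ) ^ s * (p : ℚ) ^ (-s) * ((p : ℚ) ^ d * padicNorm p a) := by
        rw [← zpow_add₀ hp0.ne', add_neg_cancel, zpow_zero, one_mul]
    _ ≤ (p : ℚ) ^ s * padicNorm p b * ((p : ℚ) ^ d * padicNorm p a) := by gcongr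
    _ = _ := by ring

lemma padicNorm_prod_add_sub_prod_le {w : ℕ → ℚ} {h r : ℚ} (hr0 : 0 ≤ r) (hr1 : r ≤ 1) :
    ∀ n, (∀ j < n, padicNorm p h ≤ r * padicNorm p (w j)) →
      padicNorm p (∏ j ∈ range n, (w j + h) - ∏ j ∈ range n, w j)
        ≤ r * padicNorm p (∏ j ∈ range n, w j)
  | 0, _ => by simp [hr0]
  | n + 1, hw => by
    set P := ∏ j ∈ range n, w j
    set Q := ∏ j ∈ range n, (w j + h)
    have ih : padicNorm p (Q - P) ≤ r * padicNorm p P :=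
      padicNorm_prod_add_sub_prod_le hr0 hr1 n fun j hj => hw j (by omega)
    have hQ : padicNorm p Q ≤ padicNorm p P :=
      calc padicNorm p Q = padicNorm p ((Q - P) + P) := by rw [sub_add_cancel]
        _ ≤ max (padicNorm p (Q - P)) (padicNorm p P) := padicNorm.nonarchimedean
        _ ≤ padicNorm p P :=
          max_le (ih.trans (mul_le_of_le_one_left (padicNorm.nonneg _) hr1)) le_rfl
    rw [prod_range_succ, prod_range_succ, padicNorm.mul,
      show Q * (w n + h) - P * w n = (Q - P) * w n + Q * h by ring]
    refine padicNorm.nonarchimedean.trans (max_le ?_ ?_) <;> rw [padicNorm.mul]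
    · calc padicNorm p (Q - P) * padicNorm p (w n) ≤ r * padicNorm p P * padicNorm p (w n) :=
            mul_le_mul_of_nonneg_right ih (padicNorm.nonneg _)
        _ = _ := by ring
    · calc padicNorm p Q * padicNorm p h ≤ padicNorm p P * (r * padicNorm p (w n)) :=
            mul_le_mul hQ (hw n n.lt_succ_self) (padicNorm.nonneg _) (padicNorm.nonneg _)
        _ = _ := by ring

lemma padicNorm_descFactorial_pow_add_sub_le {z c g B : ℕ} (hc : c ≤ z) (hz : z < p ^ B)
    (hB : B ≤ g + 1) :
    padicNorm p (((p ^ g + z).descFactorial c : ℚ) - z.descFactorial c)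
      ≤ (p : ℚ) ^ ((B : ℤ) - 1 - g) * padicNorm p (z.descFactorial c) := by
  set w : ℕ → ℚ := fun j => ((z - j : ℕ) : ℚ)
  have hz_prod : (z.descFactorial c : ℚ) = ∏ j ∈ range c, w j := by
    rw [Nat.descFactorial_eq_prod_range, Nat.cast_prod]
  have hzg_prod : ((p ^ g + z).descFactorial c : ℚ) = ∏ j ∈ range c, (w j + (p : ℚ) ^ g) := by
    rw [Nat.descFactorial_eq_prod_range, Nat.cast_prod]
    refine prod_congr rfl fun j hj => ?_
    rw [mem_range] at hj
    rw [show p ^ g + z - j = z - j + p ^ g by omega]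
    push_cast
    rfl
  rw [hz_prod, hzg_prod]
  refine padicNorm_prod_add_sub_prod_le (zpow_nonneg (by positivity) _)
    (zpow_le_one_of_nonpos₀ (by exact_mod_cast hp.out.one_le) (by omega)) c fun j hj => ?_
  have hwj : z - j ≠ 0 := by omega
  have hB0 : B ≠ 0 := by rintro rfl; rw [pow_zero] at hz; omega
  have hval : padicValNat p (z - j) ≤ B - 1 :=
    (padicValNat_le_nat_log _).trans (Nat.le_sub_one_of_lt (Nat.log_lt_of_lt_pow hwj (by omega)))
  calc padicNorm p ((p : ℚ) ^ g)
      = (p : ℚ) ^ ((B : ℤ) - 1 - g) * (p : ℚ) ^ (-((B - 1 : ℕ) : ℤ)) := by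
        rw [padicNorm_pow_self, ← zpow_add₀ (by exact_mod_cast hp.out.ne_zero)]
        congr 1
        omega
    _ ≤ (p : ℚ) ^ ((B : ℤ) - 1 - g) * padicNorm p (w j) := by
        gcongr
        exact zpow_neg_le_padicNorm_natCast hwj hval

lemma padicNorm_choose_pow_add_sub_le {z c g B : ℕ} (hc : c ≤ z) (hz : z < p ^ B)
    (hB : B ≤ g + 1) :
    padicNorm p (((p ^ g + z).choose c : ℚ) - z.choose c)
      ≤ (p : ℚ) ^ ((B : ℤ) - 1 - g) * padicNorm p (z.choose c) := by
  have hdiv (n : ℕ) : (n.choose c : ℚ) = n.descFactorial c / c ! := by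
    rw [Nat.choose_eq_descFactorial_div_factorial,
      Nat.cast_div (Nat.factorial_dvd_descFactorial n c) (by positivity)]
  rw [hdiv, hdiv, ← sub_div, padicNorm.div, padicNorm.div, mul_div_assoc']
  exact div_le_div_of_nonneg_right (padicNorm_descFactorial_pow_add_sub_le hc hz hB)
    (padicNorm.nonneg _)

end Padic

lemma inv_choose_add_inv_choose_succ {z c : ℕ} (hc : c < z) :
    (z.choose c : ℚ)⁻¹ + (z.choose (c + 1) : ℚ)⁻¹ = (z + 1) / ((z - c) * z.choose c) := by
  have hzc : (z : ℚ) - c ≠ 0 := sub_ne_zero.2 (by exact_mod_cast hc.ne')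
  have ha : (z.choose c : ℚ) ≠ 0 := by exact_mod_cast (Nat.choose_pos hc.le).ne'
  have hsucc : (z.choose (c + 1) : ℚ) = z.choose c * (z - c) / (c + 1) := by
    rw [eq_div_iff (by positivity), ← Nat.cast_sub hc.le]
    exact_mod_cast Nat.choose_succ_right_eq z c
  rw [hsucc]
  field_simp
  ring

lemma div_sub_div_eq_mul_inv_sub_inv_sub {K : Type*} [Field K] {x y c a b : K} (hx : x - c ≠ 0)
    (hy : y - c ≠ 0) (ha : a ≠ 0) (hb : b ≠ 0) :
    (y + 1) / ((y - c) * b) - (x + 1) / ((x - c) * a)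
      = (y + 1) / (y - c) * (b⁻¹ - a⁻¹) - (y - x) * (c + 1) / ((y - c) * (x - c)) * a⁻¹ := by
  field_simp
  ring

lemma padicNorm_two_natCast_sub_of_odd_of_even {n c : ℕ} (hn : Odd n) (hc : Even c) (hcn : c ≤ n) :
    padicNorm 2 ((n : ℚ) - c) = 1 := by
  rw [← Nat.cast_sub hcn, padicNorm.nat_eq_one_iff]
  exact ((Nat.odd_sub hcn).2 (iff_of_true hn hc)).not_two_dvd_nat

section TwoAdic

variable {e k c : ℕ}

lemma log_two_succ_add_one_le (hk : 2 * (k + 1) ≤ 2 ^ e) : Nat.log 2 (k + 1) + 1 ≤ e := by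
  have : 2 ^ Nat.log 2 (k + 1) ≤ k + 1 := Nat.pow_log_le_self 2 (Nat.succ_ne_zero k)
  rw [← Nat.pow_le_pow_iff_right one_lt_two, pow_succ]
  omega

lemma two_mul_add_one_lt_pow_log_add_two (k : ℕ) : 2 * k + 1 < 2 ^ (Nat.log 2 (k + 1) + 2) := by
  have : k + 1 < 2 ^ (Nat.log 2 (k + 1) + 1) := Nat.lt_pow_succ_log_self one_lt_two (k + 1)
  rw [pow_succ _ (Nat.log 2 (k + 1) + 1)]
  omega

lemma pow_padicValNat_succ_dvd_two_mul_add_two (k : ℕ) :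
    2 ^ (padicValNat 2 (k + 1) + 1) ∣ 2 * k + 1 + 1 := by
  rw [pow_succ, show 2 * k + 1 + 1 = (k + 1) * 2 by ring]
  exact mul_dvd_mul_right pow_padicValNat_dvd 2

lemma padicNorm_two_pow_add_two_mul_add_two_le (hk : 2 * (k + 1) ≤ 2 ^ e) :
    padicNorm 2 ((2 : ℚ) ^ e + (2 * k + 1) + 1) ≤ 2 ^ (-(padicValNat 2 (k + 1) + 1 : ℤ)) := by
  have hμ : padicValNat 2 (k + 1) + 1 ≤ e :=
    (padicValNat_le_nat_log _).trans_lt (log_two_succ_add_one_le hk)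
  have hdvd : 2 ^ (padicValNat 2 (k + 1) + 1) ∣ 2 ^ e + (2 * k + 1 + 1) :=
    dvd_add (pow_dvd_pow 2 hμ) (pow_padicValNat_succ_dvd_two_mul_add_two k)
  rw [add_assoc]
  exact_mod_cast padicNorm.dvd_iff_norm_le.1 (Int.natCast_dvd_natCast.2 hdvd)

lemma padicValNat_two_choose_two_mul_add_one_le (hc : c ≤ 2 * k + 1) :
    padicValNat 2 ((2 * k + 1).choose c) ≤ Nat.log 2 (k + 1) - padicValNat 2 (k + 1) := by
  have := padicValNat_choose_le_of_pow_dvd_succ hc (pow_padicValNat_succ_dvd_two_mul_add_two k)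
    (two_mul_add_one_lt_pow_log_add_two k)
  omega

lemma padicNorm_two_inv_choose_le (hc : c ≤ 2 * k + 1) :
    padicNorm 2 ((2 * k + 1).choose c : ℚ)⁻¹
      ≤ 2 ^ ((Nat.log 2 (k + 1) : ℤ) - padicValNat 2 (k + 1)) := by
  have hμ : padicValNat 2 (k + 1) ≤ Nat.log 2 (k + 1) := padicValNat_le_nat_log _
  have hna := zpow_neg_le_padicNorm_natCast (p := 2) (Nat.choose_pos hc).ne'
    (padicValNat_two_choose_two_mul_add_one_le hc)
  rw [inv_eq_one_div, padicNorm.div, padicNorm.one, one_div]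
  calc _ ≤ ((2 : ℚ) ^ (-((Nat.log 2 (k + 1) - padicValNat 2 (k + 1) : ℕ) : ℤ)))⁻¹ :=
        inv_anti₀ (zpow_pos two_pos _) (by exact_mod_cast hna)
    _ = _ := by rw [← zpow_neg, neg_neg, Nat.cast_sub hμ]

lemma padicNorm_two_inv_choose_pow_add_sub_inv_choose_le (hk : 2 * (k + 1) ≤ 2 ^ e)
    (hc : c ≤ 2 * k + 1) :
    padicNorm 2 (((2 ^ e + (2 * k + 1)).choose c : ℚ)⁻¹ - ((2 * k + 1).choose c : ℚ)⁻¹)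
      ≤ 2 ^ (2 * (Nat.log 2 (k + 1) : ℤ) - padicValNat 2 (k + 1) + 1 - e) := by
  have hL := log_two_succ_add_one_le hk
  have hμ : padicValNat 2 (k + 1) ≤ Nat.log 2 (k + 1) := padicValNat_le_nat_log _
  have hze : 2 * k + 1 < 2 ^ e := by omega
  have hvb : padicValNat 2 ((2 ^ e + (2 * k + 1)).choose c)
      ≤ Nat.log 2 (k + 1) - padicValNat 2 (k + 1) := by
    rw [padicValNat_choose_pow_add hc hze]
    exact padicValNat_two_choose_two_mul_add_one_le hc
  have hnb := zpow_neg_le_padicNorm_natCast (Nat.choose_pos (by omega)).ne' hvb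
  have hab := padicNorm_choose_pow_add_sub_le (p := 2) hc (two_mul_add_one_lt_pow_log_add_two k)
    (by omega : Nat.log 2 (k + 1) + 2 ≤ e + 1)
  refine (padicNorm_inv_sub_inv_le (by exact_mod_cast (Nat.choose_pos hc).ne') hnb hab).trans_eq ?_
  rw [Nat.cast_ofNat, Nat.cast_sub hμ]
  congr 1
  push_cast
  ring

lemma padicNorm_two_inv_choose_pair_sub_le (hk : 2 * (k + 1) ≤ 2 ^ e) (hc : Even c)
    (hck : c ≤ 2 * k) :
    padicNorm 2 ((((2 ^ e + (2 * k + 1)).choose c : ℚ)⁻¹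
        + ((2 ^ e + (2 * k + 1)).choose (c + 1) : ℚ)⁻¹)
        - (((2 * k + 1).choose c : ℚ)⁻¹ + ((2 * k + 1).choose (c + 1) : ℚ)⁻¹))
      ≤ 2 ^ (-((e : ℤ) - 2 * Nat.log 2 (k + 1) + 2 * padicValNat 2 (k + 1))) := by
  have hL := log_two_succ_add_one_le hk
  have hμ : padicValNat 2 (k + 1) ≤ Nat.log 2 (k + 1) := padicValNat_le_nat_log _
  have hinv := padicNorm_two_inv_choose_pow_add_sub_inv_choose_le hk (by omega : c ≤ 2 * k + 1)
  have hninv := padicNorm_two_inv_choose_le (by omega : c ≤ 2 * k + 1)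
  have hsucc := padicNorm_two_pow_add_two_mul_add_two_le hk
  have hodd := padicNorm_two_natCast_sub_of_odd_of_even (odd_two_mul_add_one k) hc (by omega)
  have hodd' := padicNorm_two_natCast_sub_of_odd_of_even
    ((Nat.even_pow.2 ⟨even_two, (by omega : e ≠ 0)⟩).add_odd (odd_two_mul_add_one k)) hc (by omega)
  rw [inv_choose_add_inv_choose_succ (by omega), inv_choose_add_inv_choose_succ (by omega),
    div_sub_div_eq_mul_inv_sub_inv_sub
      (fun h => zero_ne_one (by rwa [h, padicNorm.zero] at hodd))
      (fun h => zero_ne_one (by rwa [h, padicNorm.zero] at hodd'))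
      (Nat.cast_ne_zero.2 (Nat.choose_pos (by omega)).ne')
      (Nat.cast_ne_zero.2 (Nat.choose_pos (by omega)).ne')]
  simp only [Nat.cast_add, Nat.cast_mul, Nat.cast_pow, Nat.cast_ofNat, Nat.cast_one] at hodd hodd' ⊢
  have hpos (n : ℤ) : (0 : ℚ) ≤ 2 ^ n := zpow_nonneg zero_le_two n
  refine padicNorm.sub.trans (max_le ?_ ?_)
  · rw [padicNorm.mul, padicNorm.div, hodd', div_one]
    calc _ ≤ (2 : ℚ) ^ (-(padicValNat 2 (k + 1) + 1 : ℤ))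
          * 2 ^ (2 * (Nat.log 2 (k + 1) : ℤ) - padicValNat 2 (k + 1) + 1 - e) :=
          mul_le_mul hsucc hinv (padicNorm.nonneg _) (hpos _)
      _ = _ := by
        rw [← zpow_add₀ two_ne_zero]
        congr 1
        ring
  · have hc1 : padicNorm 2 ((c : ℚ) + 1) ≤ 1 := by exact_mod_cast padicNorm.of_nat (p := 2) (c + 1)
    have hpow : padicNorm 2 ((2 : ℚ) ^ e) = 2 ^ (-(e : ℤ)) := by
      simpa using padicNorm_pow_self (p := 2) e
    rw [add_sub_cancel_right, padicNorm.mul, padicNorm.div, padicNorm.mul, padicNorm.mul, hpow,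
      hodd, hodd', mul_one, div_one]
    calc _ ≤ (2 : ℚ) ^ (-(e : ℤ)) * 1 * 2 ^ ((Nat.log 2 (k + 1) : ℤ) - padicValNat 2 (k + 1)) :=
          mul_le_mul (mul_le_mul_of_nonneg_left hc1 (hpos _)) hninv (padicNorm.nonneg _)
            (mul_nonneg (hpos _) zero_le_one)
      _ ≤ _ := by
        rw [mul_one, ← zpow_add₀ two_ne_zero]
        exact zpow_le_zpow_right₀ one_le_two (by omega)

end TwoAdic

theorem stmt_0_general (e k : ℕ) (hk : k < 2 ^ (e - 1))
    (T : ℕ → ℚ)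
    (hT : ∀ i : ℕ, T i = (((2 ^ e + 2 * k + 1).choose i : ℚ))⁻¹ - (((2 * k + 1).choose i : ℚ))⁻¹) :
    ∀ i : ℕ, 2 * i + 1 ≤ k →
      T (2 * i) + T (2 * i + 1) = 0 ∨
        padicValRat 2 (T (2 * i) + T (2 * i + 1)) ≥
          (e : ℤ) - 2 * (Nat.log 2 (k + 1) : ℤ) + 2 * (padicValNat 2 (k + 1) : ℤ) := by
  intro i hi
  have hk' : 2 * (k + 1) ≤ 2 ^ e := by
    obtain _ | e := e
    · rw [pow_zero] at hk
      omega
    · rw [pow_succ]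
      simp only [add_tsub_cancel_right] at hk
      omega
  have hsum : T (2 * i) + T (2 * i + 1)
      = (((2 ^ e + (2 * k + 1)).choose (2 * i) : ℚ)⁻¹
          + ((2 ^ e + (2 * k + 1)).choose (2 * i + 1) : ℚ)⁻¹)
        - (((2 * k + 1).choose (2 * i) : ℚ)⁻¹ + ((2 * k + 1).choose (2 * i + 1) : ℚ)⁻¹) := by
    rw [hT, hT, ← add_assoc]
    ring
  rw [hsum]
  exact eq_zero_or_le_padicValRat_of_padicNorm_le (by
    exact_mod_cast padicNorm_two_inv_choose_pair_sub_le hk' (even_two_mul i) (by omega))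

/-- ν = 2-adic valuation, lg = ⌊log₂⌋, T_i = C(2^e+2k+1,i)⁻¹ − C(2k+1,i)⁻¹ in ℚ. -/
theorem stmt_0 (e k : ℕ) (he : 1 ≤ e) (hk : k < 2 ^ (e - 1))
    (T : ℕ → ℚ)
    (hT : ∀ i : ℕ, T i = (((2 ^ e + 2 * k + 1).choose i : ℚ))⁻¹ - (((2 * k + 1).choose i : ℚ))⁻¹) :
    ∀ i : ℕ, 2 * i + 1 ≤ k →
      T (2 * i) + T (2 * i + 1) = 0 ∨
        padicValRat 2 (T (2 * i) + T (2 * i + 1)) ≥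
          (e : ℤ) - 2 * (Nat.log 2 (k + 1) : ℤ) + 2 * (padicValNat 2 (k + 1) : ℤ) :=
  stmt_0_general e k hk T hT
end

section
/- Let e ≥ 1 and k be natural numbers with k < 2^(e-1) and k even. Set T_k = C(2^e+2k+1, k)⁻¹ − C(2k+1, k)⁻¹ ∈ ℚ. Then either T_k = 0 or ν(T_k) ≥ e − 2·lg(k+2). -/
/-!
Since `C(N + k, k)⁻¹ = k! / ((N + 1) ⋯ (N + k))`, we have `T_k = k! (A - B) / (A B)` with
`A = (k + 2) ⋯ (2k + 1)` and `B = (2^e + k + 2) ⋯ (2^e + 2k + 1)`. Every factor `a` of `A` has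
`ν(a) ≤ lg(k + 2) + 1 < e`, so `ν(a + 2^e) = ν(a)` and `ν(B) = ν(A) = k` (the latter because
`(k + 1)! A = (2k + 1)!` and `k + 1` is odd). Writing `a = 2^ν(a) u`, the factor `a + 2^e` is
`2^ν(a) (u + 2^(e - ν(a)))`, so `B - A` is divisible by `2^(ν(A) + e - lg(k + 2) - 1)`.
Legendre's formula gives `ν(k!) = k - s₂(k)`, and for even `k` one has
`2^(s₂(k) + 1) ≤ k + 2`.
-/

open Finset Nat

theorem Finset.prod_mul_dvd_prod_sub_prod {ι R : Type*} [CommRing R] (s : Finset ι)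
    {a b d : ι → R} {n : R} (hd : ∀ i ∈ s, d i ∣ a i)
    (hdn : ∀ i ∈ s, d i * n ∣ b i - a i) :
    (∏ i ∈ s, d i) * n ∣ ∏ i ∈ s, b i - ∏ i ∈ s, a i := by
  classical
  induction s using Finset.induction_on with
  | empty => simp
  | insert j s hj ih =>
    simp only [Finset.mem_insert, forall_eq_or_imp] at hd hdn
    have hdb : ∏ i ∈ s, d i ∣ ∏ i ∈ s, b i := Finset.prod_dvd_prod_of_dvd _ _ fun i hi =>
      (sub_add_cancel (b i) (a i)) ▸ dvd_add (dvd_of_mul_right_dvd (hdn.2 i hi)) (hd.2 i hi)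
    rw [prod_insert hj, prod_insert hj, prod_insert hj,
      show b j * ∏ i ∈ s, b i - a j * ∏ i ∈ s, a i
        = (b j - a j) * ∏ i ∈ s, b i + a j * (∏ i ∈ s, b i - ∏ i ∈ s, a i) by ring]
    refine dvd_add ?_ ?_
    · rw [mul_right_comm]
      exact mul_dvd_mul hdn.1 hdb
    · rw [mul_assoc]
      exact mul_dvd_mul hd.1 (ih hd.2 hdn.2)

theorem padicValNat_lt_of_lt_pow {p a j : ℕ} (ha : a ≠ 0) (h : a < p ^ j) :
    padicValNat p a < j :=
  (padicValNat_le_nat_log a).trans_lt (Nat.log_lt_of_lt_pow ha h)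

section padicValNat

variable {p : ℕ} [Fact p.Prime]

theorem padicValNat_finset_prod {ι : Type*} {s : Finset ι} {f : ι → ℕ}
    (hf : ∀ i ∈ s, f i ≠ 0) :
    padicValNat p (∏ i ∈ s, f i) = ∑ i ∈ s, padicValNat p (f i) := by
  simp only [← Nat.factorization_def _ Fact.out, Nat.factorization_prod_apply hf]

theorem padicValNat_pow_add {e a : ℕ} (ha : a ≠ 0) (hae : a < p ^ e) :
    padicValNat p (p ^ e + a) = padicValNat p a := by
  have hlt : padicValRat p a < padicValRat p ((p : ℚ) ^ e) := by
    rw [padicValRat.of_nat, padicValRat.pow, padicValRat.self (Fact.out : p.Prime).one_lt, mul_one]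
    exact_mod_cast padicValNat_lt_of_lt_pow ha hae
  have hp : (p : ℚ) ^ e ≠ 0 := pow_ne_zero _ (by exact_mod_cast (Fact.out : p.Prime).ne_zero)
  have := padicValRat.add_eq_of_lt (by positivity) (by exact_mod_cast ha) hp hlt
  rw [add_comm] at this
  exact_mod_cast this

theorem padicValNat_ascFactorial_pow_add {e n k : ℕ} (hn : 0 < n) (hnk : n + k ≤ p ^ e) :
    padicValNat p ((p ^ e + n).ascFactorial k) = padicValNat p (n.ascFactorial k) := by
  rw [ascFactorial_eq_prod_range, ascFactorial_eq_prod_range,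
    padicValNat_finset_prod fun i _ => by omega, padicValNat_finset_prod fun i _ => by omega]
  refine Finset.sum_congr rfl fun i hi => ?_
  rw [add_assoc]
  exact padicValNat_pow_add (by omega) (by simp at hi; omega)

theorem pow_dvd_ascFactorial_pow_add_sub {e n k m : ℕ} (hn : 0 < n)
    (hm : Nat.log p (n + k - 1) + m ≤ e) :
    (p : ℤ) ^ (padicValNat p (n.ascFactorial k) + m) ∣
      ((p ^ e + n).ascFactorial k : ℤ) - n.ascFactorial k := by
  rw [ascFactorial_eq_prod_range, ascFactorial_eq_prod_range,
    padicValNat_finset_prod fun i _ => by omega, pow_add, ← Finset.prod_pow_eq_pow_sum]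
  push_cast
  refine Finset.prod_mul_dvd_prod_sub_prod _ (fun i _ => ?_) (fun i hi => ?_)
  · exact_mod_cast pow_padicValNat_dvd
  · rw [add_assoc, add_sub_cancel_right, ← pow_add]
    have hi : i < k := by simpa using hi
    have := (padicValNat_le_nat_log (p := p) (n + i)).trans (Nat.log_mono_right (b := p)
      (show n + i ≤ n + k - 1 by omega))
    exact pow_dvd_pow _ (by omega)

theorem padicValRat_natCast_mul_intCast_div {a b c : ℕ} {z : ℤ} (ha : a ≠ 0) (hz : z ≠ 0)
    (hb : b ≠ 0) (hc : c ≠ 0) :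
    padicValRat p (a * z / (b * c)) =
      padicValNat p a + padicValInt p z - padicValNat p b - padicValNat p c := by
  have ha' : (a : ℚ) ≠ 0 := by exact_mod_cast ha
  have hz' : (z : ℚ) ≠ 0 := by exact_mod_cast hz
  have hb' : (b : ℚ) ≠ 0 := by exact_mod_cast hb
  have hc' : (c : ℚ) ≠ 0 := by exact_mod_cast hc
  rw [padicValRat.div (mul_ne_zero ha' hz') (mul_ne_zero hb' hc'), padicValRat.mul ha' hz',
    padicValRat.mul hb' hc', padicValRat.of_int, padicValRat.of_nat, padicValRat.of_nat,
    padicValRat.of_nat]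
  ring

end padicValNat

theorem two_pow_digits_sum_le (n : ℕ) : 2 ^ (Nat.digits 2 n).sum ≤ n + 1 := by
  induction n using Nat.strong_induction_on with
  | _ n ih =>
    rcases n.eq_zero_or_pos with rfl | hn
    · simp
    rw [Nat.digits_def' one_lt_two hn, List.sum_cons, pow_add]
    have := ih (n / 2) (Nat.div_lt_self hn one_lt_two)
    rcases Nat.mod_two_eq_zero_or_one n with h | h <;> rw [h] <;> omega

theorem padicValNat_two_ascFactorial_of_even {k : ℕ} (hk : Even k) :
    padicValNat 2 ((k + 2).ascFactorial k) = k := by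
  have h := congrArg (padicValNat 2) (factorial_mul_ascFactorial (k + 1) k)
  rw [padicValNat.mul (factorial_ne_zero _) (ascFactorial_pos _ _).ne',
    show k + 1 + k = 2 * k + 1 by ring, padicValNat_factorial_mul_add k one_lt_two,
    padicValNat_factorial_mul, factorial_succ, padicValNat.mul k.succ_ne_zero (factorial_ne_zero _),
    padicValNat.eq_zero_of_not_dvd
      (by simpa [← even_iff_two_dvd, Nat.even_add_one] using hk)] at h
  simpa using h

theorem lt_padicValNat_factorial_add_log_of_even {k : ℕ} (hk : Even k) :
    k < padicValNat 2 k ! + Nat.log 2 (k + 2) := by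
  obtain ⟨m, rfl⟩ := hk
  have hlegendre := sub_one_mul_padicValNat_factorial (p := 2) m
  have hs := two_pow_digits_sum_le m
  have hlog : (Nat.digits 2 m).sum + 1 ≤ Nat.log 2 (m + m + 2) :=
    Nat.le_log_of_pow_le one_lt_two (by rw [pow_succ]; omega)
  rw [← two_mul, padicValNat_factorial_mul] at *
  have := Nat.digit_sum_le 2 m
  omega

theorem inv_choose_eq_factorial_div_ascFactorial (N k : ℕ) :
    (((N + k).choose k : ℕ) : ℚ)⁻¹ = k ! / (N + 1).ascFactorial k := by
  rw [ascFactorial_eq_factorial_mul_choose, Nat.cast_mul, div_mul_cancel_left₀ (by positivity)]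

theorem inv_choose_sub_inv_choose (N M k : ℕ) :
    (((N + k).choose k : ℕ) : ℚ)⁻¹ - (((M + k).choose k : ℕ) : ℚ)⁻¹ =
      k ! * (((M + 1).ascFactorial k : ℤ) - (N + 1).ascFactorial k : ℤ) /
        ((M + 1).ascFactorial k * (N + 1).ascFactorial k) := by
  rw [inv_choose_eq_factorial_div_ascFactorial, inv_choose_eq_factorial_div_ascFactorial,
    div_sub_div _ _ (by positivity) (by positivity)]
  push_cast
  ring

/-- e ≥ 1, k < 2^(e-1), k even; T_k = C(2^e+2k+1,k)⁻¹ − C(2k+1,k)⁻¹ is zero or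
has 2-adic valuation ≥ e − 2·lg(k+2). -/
theorem stmt_1 (e k : ℕ) (he : 1 ≤ e) (hk : k < 2 ^ (e - 1)) (hkeven : Even k)
    (T : ℚ)
    (hT : T = (((2 ^ e + 2 * k + 1).choose k : ℚ))⁻¹ - (((2 * k + 1).choose k : ℚ))⁻¹) :
    T = 0 ∨ padicValRat 2 T ≥ (e : ℤ) - 2 * (Nat.log 2 (k + 2) : ℤ) := by
  refine or_iff_not_imp_left.2 fun hT0 => ?_
  rw [show 2 ^ e + 2 * k + 1 = 2 ^ e + (k + 1) + k by ring, show 2 * k + 1 = k + 1 + k by ring,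
    inv_choose_sub_inv_choose, add_assoc (2 ^ e)] at hT
  have hk0 : k ≠ 0 := by rintro rfl; simp [hT] at hT0
  have hpow : 2 * 2 ^ (e - 1) = 2 ^ e := by rw [← _root_.pow_succ']; congr 1; omega
  have hLe : Nat.log 2 (k + 2) < e := Nat.log_lt_of_lt_pow (by omega) (by omega)
  have hνA : padicValNat 2 ((k + 2).ascFactorial k) = k :=
    padicValNat_two_ascFactorial_of_even hkeven
  have hνB : padicValNat 2 ((2 ^ e + (k + 2)).ascFactorial k) = k :=
    (padicValNat_ascFactorial_pow_add (by omega) (by omega)).trans hνA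
  have hlog2 : Nat.log 2 (k + 2 + k - 1) ≤ Nat.log 2 (k + 2) + 1 :=
    (Nat.log_mono_right (by omega)).trans_eq (Nat.log_mul_base one_lt_two (by omega))
  have hdvd := pow_dvd_ascFactorial_pow_add_sub (p := 2) (e := e) (k := k) (n := k + 2)
    (m := e - (Nat.log 2 (k + 2) + 1)) (by omega) (by omega)
  have hA0 : (k + 2).ascFactorial k ≠ 0 := (ascFactorial_pos _ _).ne'
  have hB0 : (2 ^ e + (k + 2)).ascFactorial k ≠ 0 := (ascFactorial_pos _ _).ne'
  generalize (k + 2).ascFactorial k = A at hT hνA hdvd hA0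
  generalize (2 ^ e + (k + 2)).ascFactorial k = B at hT hνB hdvd hB0
  have hAB : (A : ℤ) - B ≠ 0 := by rintro h; apply hT0; rw [hT, h]; simp
  have hνAB : k + (e - (Nat.log 2 (k + 2) + 1)) ≤ padicValInt 2 ((A : ℤ) - B) :=
    ((padicValInt_dvd_iff _ _).1 (dvd_sub_comm.1 (hνA ▸ hdvd))).resolve_left hAB
  have hfact := lt_padicValNat_factorial_add_log_of_even hkeven
  rw [hT, padicValRat_natCast_mul_intCast_div k.factorial_ne_zero hAB hA0 hB0, hνA, hνB]
  omega
end

section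
/- Let e ≥ 1 and k be natural numbers with k < 2^(e-1). Then the rational number S = ∑_{i=0}^{k} ( C(2^e+2k+1, i)⁻¹ − C(2k+1, i)⁻¹ ) satisfies: either S = 0 or ν(S) ≥ e − 2·lg(k+2) + 2·ν(k+1). -/
/-!
Group the terms in pairs `i = t, t + 1` with `t` even. For any `m`,
`C(m,t)⁻¹ + C(m,t+1)⁻¹ = (m+1) t! / m(m-1)⋯(m-t)`, so with `n = 2k+1` and `N = 2^e + n` the
`N`-pair is the `n`-pair times `(N+1)/(n+1) · ∏_{s ≤ t} (n-s)/(N-s)`. Every number involved is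
below `2^(λ+2)`, where `λ = lg(k+2)`, so each of these factors is `≡ 1 mod 2^(e-λ-1)`, and the
difference of the two pairs has valuation at least `e - λ + ν(k+1) - ν C(2k+1,t)`.
Kummer's theorem bounds `ν C(2k+1,t) + ν(k+1) ≤ λ`. For even `k` the unpaired last term is
handled in the same way, using `ν C(2k+1,k) + 1 = ν C(2k+2,k+1) = s₂(k+1) ≤ λ`, `s₂` being
the binary digit sum.
-/

open Finset Nat

theorem padicValNat_choose_add_padicValNat_le_log {p m j : ℕ} [Fact p.Prime]
    (hjm : j ≤ m) :
    padicValNat p (m.choose j) + padicValNat p j ≤ log p m := by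
  rw [padicValNat_choose hjm (lt_add_one _)]
  have hsub : {i ∈ Ico 1 (log p m + 1) | p ^ i ≤ j % p ^ i + (m - j) % p ^ i} ⊆
      Ico (padicValNat p j + 1) (log p m + 1) := by
    intro i hi
    simp only [mem_filter, mem_Ico] at hi ⊢
    refine ⟨?_, hi.1.2⟩
    by_contra! hij
    have hdvd : p ^ i ∣ j := (pow_dvd_pow p (by omega)).trans pow_padicValNat_dvd
    have hlt := Nat.mod_lt (m - j) (pow_pos (Fact.out : p.Prime).pos i)
    rw [Nat.mod_eq_zero_of_dvd hdvd] at hi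
    omega
  have hval : padicValNat p j ≤ log p m :=
    (padicValNat_le_nat_log j).trans (log_mono_right hjm)
  have := card_le_card hsub
  rw [Nat.card_Ico] at this
  omega

theorem sum_digits_two_le_log_add_one (m : ℕ) : (Nat.digits 2 m).sum ≤ log 2 (m + 1) := by
  induction m using Nat.strong_induction_on with
  | _ m ih =>
    rcases Nat.eq_zero_or_pos m with rfl | hm
    · simp
    rw [Nat.digits_def' one_lt_two hm, List.sum_cons]
    have hhalf := ih (m / 2) (Nat.div_lt_self hm one_lt_two)
    rcases Nat.mod_two_eq_zero_or_one m with h | h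
    · rw [h, zero_add]
      exact hhalf.trans (log_mono_right (by omega))
    · rw [h, show m + 1 = (m / 2 + 1) * 2 by omega, log_mul_base one_lt_two (by omega)]
      omega

theorem padicValNat_two_centralBinom_le_log (m : ℕ) :
    padicValNat 2 m.centralBinom ≤ log 2 (m + 1) := by
  have h := sub_one_mul_padicValNat_choose_eq_sub_sum_digits' (p := 2) (n := m) (k := m)
  rcases Nat.eq_zero_or_pos m with rfl | hm
  · simp
  rw [Nat.digits_def' one_lt_two (by omega : 0 < m + m), show (m + m) % 2 = 0 by omega,
    show (m + m) / 2 = m by omega, List.sum_cons, ← two_mul,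
    ← centralBinom_eq_two_mul_choose] at h
  have := sum_digits_two_le_log_add_one m
  omega

theorem padicValNat_two_choose_two_mul_add_one_eq {k t : ℕ} (ht : t ≤ 2 * k + 1) :
    padicValNat 2 ((2 * k + 1).choose t) + 1 + padicValNat 2 (k + 1) =
      padicValNat 2 ((2 * k + 2).choose (t + 1)) + padicValNat 2 (t + 1) := by
  have h := congrArg (padicValNat 2) (add_one_mul_choose_eq (2 * k + 1) t)
  rw [padicValNat.mul (by omega) (choose_pos ht).ne', padicValNat.mul
    (choose_pos (by omega)).ne' (by omega), show 2 * k + 1 + 1 = 2 * (k + 1) by ring,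
    padicValNat.mul (by omega) (by omega), padicValNat.self one_lt_two] at h
  rw [show 2 * k + 2 = 2 * (k + 1) by ring]
  omega

theorem padicValNat_two_choose_two_mul_add_one_add_le {k t : ℕ} (ht : t ≤ k) :
    padicValNat 2 ((2 * k + 1).choose t) + padicValNat 2 (k + 1) ≤ log 2 (k + 2) := by
  have h := padicValNat_two_choose_two_mul_add_one_eq (show t ≤ 2 * k + 1 by omega)
  have hA := padicValNat_choose_add_padicValNat_le_log (p := 2) (show t + 1 ≤ 2 * k + 2 by omega)
  have hlog : log 2 (2 * k + 2) = log 2 (k + 1) + 1 := by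
    rw [show 2 * k + 2 = (k + 1) * 2 by ring, log_mul_base one_lt_two (by omega)]
  have := log_mono_right (b := 2) (show k + 1 ≤ k + 2 by omega)
  omega

theorem padicValNat_two_choose_two_mul_add_one_self_lt_log (k : ℕ) :
    padicValNat 2 ((2 * k + 1).choose k) < log 2 (k + 2) := by
  have h := padicValNat_two_choose_two_mul_add_one_eq (show k ≤ 2 * k + 1 by omega)
  have hB := padicValNat_two_centralBinom_le_log (k + 1)
  rw [centralBinom_eq_two_mul_choose, show 2 * (k + 1) = 2 * k + 2 by ring,
    show k + 1 + 1 = k + 2 from rfl] at hB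
  omega

theorem inv_choose_eq_factorial_div_descFactorial (m t : ℕ) :
    ((m.choose t : ℚ))⁻¹ = t ! / m.descFactorial t := by
  rw [descFactorial_eq_factorial_mul_choose, Nat.cast_mul, div_mul_cancel_left₀ (by positivity)]

theorem inv_choose_add_inv_choose_succ_s2 {m t : ℕ} (ht : t < m) :
    ((m.choose t : ℚ))⁻¹ + ((m.choose (t + 1) : ℚ))⁻¹ =
      (m + 1) * t ! / m.descFactorial (t + 1) := by
  have hd : (m.descFactorial t : ℚ) ≠ 0 := by
    exact_mod_cast (descFactorial_pos.mpr ht.le).ne'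
  have hmt : (m : ℚ) - t ≠ 0 := sub_ne_zero.mpr (by exact_mod_cast ht.ne')
  rw [inv_choose_eq_factorial_div_descFactorial, inv_choose_eq_factorial_div_descFactorial,
    descFactorial_succ, factorial_succ]
  push_cast [Nat.cast_sub ht.le]
  field_simp
  ring

section padicNorm

variable {p : ℕ} [hp : Fact p.Prime]

omit hp in
theorem padicNorm_natCast_of_ne_zero {x : ℕ} (hx : x ≠ 0) :
    padicNorm p x = (p : ℚ) ^ (-(padicValNat p x : ℤ)) := by
  rw [padicNorm.eq_zpow_of_nonzero (by exact_mod_cast hx), padicValRat.of_nat]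

theorem padicNorm_prime_pow (e : ℕ) : padicNorm p ((p : ℚ) ^ e) = (p : ℚ) ^ (-(e : ℤ)) := by
  rw [← Nat.cast_pow, padicNorm_natCast_of_ne_zero (pow_ne_zero e hp.out.ne_zero),
    padicValNat.prime_pow]

theorem padicNorm_mul_sub_one_le {u v δ : ℚ} (hδ : δ ≤ 1)
    (hu : padicNorm p (u - 1) ≤ δ) (hv : padicNorm p (v - 1) ≤ δ) :
    padicNorm p (u * v - 1) ≤ δ := by
  have hv1 : padicNorm p v ≤ 1 := by
    calc padicNorm p v = padicNorm p ((v - 1) + 1) := by ring_nf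
      _ ≤ max (padicNorm p (v - 1)) (padicNorm p 1) := padicNorm.nonarchimedean
      _ ≤ 1 := by rw [padicNorm.one]; exact max_le (hv.trans hδ) le_rfl
  calc padicNorm p (u * v - 1) = padicNorm p ((u - 1) * v + (v - 1)) := by ring_nf
    _ ≤ max (padicNorm p ((u - 1) * v)) (padicNorm p (v - 1)) := padicNorm.nonarchimedean
    _ ≤ δ := by
      rw [padicNorm.mul]
      exact max_le ((mul_le_mul hu hv1 (padicNorm.nonneg _)
        ((padicNorm.nonneg _).trans hu)).trans_eq (mul_one δ)) hv

theorem padicNorm_prod_sub_one_le {ι : Type*} {s : Finset ι} {f : ι → ℚ} {δ : ℚ}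
    (hδ₀ : 0 ≤ δ) (hδ₁ : δ ≤ 1) (h : ∀ i ∈ s, padicNorm p (f i - 1) ≤ δ) :
    padicNorm p ((∏ i ∈ s, f i) - 1) ≤ δ := by
  classical
  induction s using Finset.induction with
  | empty => simpa using hδ₀
  | insert i s hi ih =>
    rw [prod_insert hi]
    exact padicNorm_mul_sub_one_le hδ₁ (h i (mem_insert_self i s))
      (ih fun j hj => h j (mem_insert_of_mem hj))

theorem padicNorm_pow_div_natCast_le {e x L : ℕ} (hx : x ≠ 0) (hxL : x < p ^ (L + 1)) :
    padicNorm p (p ^ e : ℚ) / padicNorm p x ≤ (p : ℚ) ^ ((L : ℤ) - e) := by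
  have hval : padicValNat p x ≤ L :=
    (padicValNat_le_nat_log x).trans (Nat.lt_succ_iff.mp (log_lt_of_lt_pow hx hxL))
  rw [padicNorm_prime_pow, padicNorm_natCast_of_ne_zero hx,
    ← zpow_sub₀ (by exact_mod_cast hp.out.ne_zero)]
  exact zpow_le_zpow_right₀ (by exact_mod_cast hp.out.one_le) (by omega)

theorem padicNorm_natCast_add_pow_div_sub_one_le {e x L : ℕ} (hx : x ≠ 0)
    (hxL : x < p ^ (L + 1)) :
    padicNorm p (((x : ℚ) + p ^ e) / x - 1) ≤ (p : ℚ) ^ ((L : ℤ) - e) := by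
  have hx' : (x : ℚ) ≠ 0 := by exact_mod_cast hx
  rw [show ((x : ℚ) + p ^ e) / x - 1 = p ^ e / x by field_simp; ring, padicNorm.div]
  exact padicNorm_pow_div_natCast_le hx hxL

theorem padicNorm_natCast_div_add_pow_sub_one_le {e x L : ℕ} (hx : x ≠ 0) (hxe : x < p ^ e)
    (hxL : x < p ^ (L + 1)) :
    padicNorm p ((x : ℚ) / (x + p ^ e) - 1) ≤ (p : ℚ) ^ ((L : ℤ) - e) := by
  have hlt : padicNorm p (p ^ e : ℚ) < padicNorm p x := by
    have hval : padicValNat p x < e :=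
      (padicValNat_le_nat_log x).trans_lt (log_lt_of_lt_pow hx hxe)
    rw [padicNorm_prime_pow, padicNorm_natCast_of_ne_zero hx]
    exact zpow_lt_zpow_right₀ (by exact_mod_cast hp.out.one_lt) (by omega)
  have hsum : padicNorm p ((x : ℚ) + p ^ e) = padicNorm p x := by
    rw [padicNorm.add_eq_max_of_ne hlt.ne', max_eq_left hlt.le]
  have hsum0 : (x : ℚ) + p ^ e ≠ 0 := by positivity
  rw [show (x : ℚ) / (x + p ^ e) - 1 = -(p ^ e / (x + p ^ e)) by field_simp; ring,
    padicNorm.neg, padicNorm.div, hsum]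
  exact padicNorm_pow_div_natCast_le hx hxL

theorem padicNorm_descFactorial_div_sub_one_le {e n t L : ℕ} (ht : t ≤ n) (hn : n < p ^ e)
    (hnL : n < p ^ (L + 1)) (hL : L ≤ e) :
    padicNorm p ((n.descFactorial t : ℚ) / (p ^ e + n).descFactorial t - 1) ≤
      (p : ℚ) ^ ((L : ℤ) - e) := by
  have hratio : (n.descFactorial t : ℚ) / (p ^ e + n).descFactorial t =
      ∏ s ∈ range t, ((n - s : ℕ) : ℚ) / ((n - s : ℕ) + p ^ e) := by
    rw [descFactorial_eq_prod_range, descFactorial_eq_prod_range, Nat.cast_prod, Nat.cast_prod,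
      ← prod_div_distrib]
    refine prod_congr rfl fun s hs => ?_
    rw [mem_range] at hs
    rw [show p ^ e + n - s = (n - s) + p ^ e by omega]
    push_cast
    rfl
  rw [hratio]
  refine padicNorm_prod_sub_one_le (by positivity)
    (zpow_le_one_of_nonpos₀ (by exact_mod_cast hp.out.one_le) (by omega)) fun s hs => ?_
  rw [mem_range] at hs
  exact padicNorm_natCast_div_add_pow_sub_one_le (by omega) (by omega) (by omega)

theorem padicNorm_inv_natCast {x : ℕ} (hx : x ≠ 0) :
    padicNorm p ((x : ℚ))⁻¹ = (p : ℚ) ^ (padicValNat p x : ℤ) := by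
  rw [inv_eq_one_div, padicNorm.div, padicNorm.one, padicNorm_natCast_of_ne_zero hx, one_div,
    ← zpow_neg, neg_neg]

theorem padicNorm_inv_choose_sub_inv_choose_le {e n t L : ℕ} (ht : t ≤ n) (hn : n < p ^ e)
    (hnL : n < p ^ (L + 1)) (hL : L ≤ e) :
    padicNorm p ((((p ^ e + n).choose t : ℚ))⁻¹ - ((n.choose t : ℚ))⁻¹) ≤
      (p : ℚ) ^ ((padicValNat p (n.choose t) : ℤ) + L - e) := by
  have ha : (n.descFactorial t : ℚ) ≠ 0 := by
    exact_mod_cast (descFactorial_pos.mpr ht).ne'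
  have hb : ((p ^ e + n).descFactorial t : ℚ) ≠ 0 := by
    exact_mod_cast (descFactorial_pos.mpr (by omega)).ne'
  have hfactor : (((p ^ e + n).choose t : ℚ))⁻¹ - ((n.choose t : ℚ))⁻¹ =
      ((n.choose t : ℚ))⁻¹ *
        ((n.descFactorial t : ℚ) / (p ^ e + n).descFactorial t - 1) := by
    rw [inv_choose_eq_factorial_div_descFactorial, inv_choose_eq_factorial_div_descFactorial]
    field_simp
  rw [hfactor, padicNorm.mul, padicNorm_inv_natCast (choose_pos ht).ne', add_sub_assoc,
    zpow_add₀ (by exact_mod_cast hp.out.ne_zero)]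
  gcongr
  exact padicNorm_descFactorial_div_sub_one_le ht hn hnL hL

theorem padicNorm_inv_choose_add_succ_sub_le {e n t L : ℕ} (ht : t < n) (hn : n < p ^ e)
    (hnL : n + 1 < p ^ (L + 1)) (hL : L ≤ e) :
    padicNorm p (((((p ^ e + n).choose t : ℚ))⁻¹ + (((p ^ e + n).choose (t + 1) : ℚ))⁻¹) -
        (((n.choose t : ℚ))⁻¹ + ((n.choose (t + 1) : ℚ))⁻¹)) ≤
      (p : ℚ) ^ ((padicValNat p (n.choose t) : ℤ) + padicValNat p (n - t) -
        padicValNat p (n + 1) + L - e) := by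
  have hp0 : (p : ℚ) ≠ 0 := by exact_mod_cast hp.out.ne_zero
  have ha : (n.descFactorial t : ℚ) ≠ 0 := by
    exact_mod_cast (descFactorial_pos.mpr ht.le).ne'
  have hb : ((p ^ e + n).descFactorial (t + 1) : ℚ) ≠ 0 := by
    exact_mod_cast (descFactorial_pos.mpr (by omega)).ne'
  have hnt : ((n - t : ℕ) : ℚ) ≠ 0 := by exact_mod_cast (by omega : n - t ≠ 0)
  have hfactor : ((((p ^ e + n).choose t : ℚ))⁻¹ + (((p ^ e + n).choose (t + 1) : ℚ))⁻¹) -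
        (((n.choose t : ℚ))⁻¹ + ((n.choose (t + 1) : ℚ))⁻¹) =
      ((n + 1 : ℕ) : ℚ) * ((n - t : ℕ) : ℚ)⁻¹ * ((n.choose t : ℚ))⁻¹ *
        ((((n + 1 : ℕ) : ℚ) + p ^ e) / (n + 1 : ℕ) *
          ((n.descFactorial (t + 1) : ℚ) / (p ^ e + n).descFactorial (t + 1)) - 1) := by
    rw [inv_choose_add_inv_choose_succ_s2 ht, inv_choose_add_inv_choose_succ_s2 (by omega),
      inv_choose_eq_factorial_div_descFactorial, descFactorial_succ n t]
    push_cast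
    field_simp
    ring
  have hR := padicNorm_mul_sub_one_le
    (zpow_le_one_of_nonpos₀ (by exact_mod_cast hp.out.one_le) (by omega))
    (padicNorm_natCast_add_pow_div_sub_one_le (by omega) hnL)
    (padicNorm_descFactorial_div_sub_one_le (t := t + 1) (by omega) hn (by omega) hL)
  rw [hfactor, padicNorm.mul, padicNorm.mul, padicNorm.mul,
    padicNorm_natCast_of_ne_zero (by omega : n + 1 ≠ 0), padicNorm_inv_natCast (by omega),
    padicNorm_inv_natCast (choose_pos ht.le).ne']
  calc _ ≤ (p : ℚ) ^ (-(padicValNat p (n + 1) : ℤ)) *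
        (p : ℚ) ^ (padicValNat p (n - t) : ℤ) * (p : ℚ) ^ (padicValNat p (n.choose t) : ℤ) *
        (p : ℚ) ^ ((L : ℤ) - e) := by gcongr
    _ = _ := by
      rw [← zpow_add₀ hp0, ← zpow_add₀ hp0, ← zpow_add₀ hp0]
      ring_nf

theorem le_padicValRat_of_padicNorm_le {q : ℚ} {d : ℤ} (hq : q ≠ 0)
    (h : padicNorm p q ≤ (p : ℚ) ^ (-d)) : d ≤ padicValRat p q := by
  rw [padicNorm.eq_zpow_of_nonzero hq, zpow_le_zpow_iff_right₀ (by exact_mod_cast hp.out.one_lt)]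
    at h
  omega

end padicNorm

theorem sum_range_two_mul_eq_sum_pairs {M : Type*} [AddCommMonoid M] (f : ℕ → M) (q : ℕ) :
    ∑ i ∈ range (2 * q), f i = ∑ j ∈ range q, (f (2 * j) + f (2 * j + 1)) := by
  induction q with
  | zero => simp
  | succ q ih => rw [mul_add_one, sum_range_succ, sum_range_succ, ih, sum_range_succ, add_assoc]

section

variable {e k : ℕ}

theorem padicNorm_inv_choose_pair_sub_le (hk : 2 * k + 1 < 2 ^ e) (hke : log 2 (k + 2) < e)
    {t : ℕ} (ht : t < k) (ht2 : Even t) :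
    padicNorm 2
        (((((2 ^ e + 2 * k + 1).choose t : ℚ))⁻¹ - (((2 * k + 1).choose t : ℚ))⁻¹) +
          ((((2 ^ e + 2 * k + 1).choose (t + 1) : ℚ))⁻¹ -
            (((2 * k + 1).choose (t + 1) : ℚ))⁻¹)) ≤
      2 ^ (-((e : ℤ) - 2 * log 2 (k + 2) + 2 * padicValNat 2 (k + 1))) := by
  have hlog := lt_pow_succ_log_self one_lt_two (k + 2)
  have hodd : padicValNat 2 (2 * k + 1 - t) = 0 :=
    padicValNat.eq_zero_of_not_dvd (by obtain ⟨r, rfl⟩ := ht2; omega)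
  have heven : padicValNat 2 (2 * k + 1 + 1) = 1 + padicValNat 2 (k + 1) := by
    rw [show 2 * k + 1 + 1 = 2 * (k + 1) by ring, padicValNat.mul (by omega) (by omega),
      padicValNat.self one_lt_two]
  have hcarry := padicValNat_two_choose_two_mul_add_one_add_le (show t ≤ k by omega)
  rw [← add_sub_add_comm, add_assoc (2 ^ e)]
  have h := padicNorm_inv_choose_add_succ_sub_le (p := 2) (n := 2 * k + 1) (t := t)
    (L := log 2 (k + 2) + 1) (by omega) hk (by rw [pow_succ]; omega) hke
  rw [Nat.cast_ofNat] at h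
  exact h.trans (zpow_le_zpow_right₀ one_le_two (by omega))

theorem padicNorm_inv_choose_self_sub_le (hk : 2 * k + 1 < 2 ^ e) (hke : log 2 (k + 2) < e)
    (hk2 : Even k) :
    padicNorm 2
        ((((2 ^ e + 2 * k + 1).choose k : ℚ))⁻¹ - (((2 * k + 1).choose k : ℚ))⁻¹) ≤
      2 ^ (-((e : ℤ) - 2 * log 2 (k + 2) + 2 * padicValNat 2 (k + 1))) := by
  have hlog := lt_pow_succ_log_self one_lt_two (k + 2)
  have hodd : padicValNat 2 (k + 1) = 0 :=
    padicValNat.eq_zero_of_not_dvd (by obtain ⟨r, rfl⟩ := hk2; omega)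
  have hcarry := padicValNat_two_choose_two_mul_add_one_self_lt_log k
  rw [add_assoc (2 ^ e)]
  have h := padicNorm_inv_choose_sub_inv_choose_le (p := 2) (n := 2 * k + 1) (t := k)
    (L := log 2 (k + 2) + 1) (by omega) hk (by rw [pow_succ]; omega) hke
  rw [Nat.cast_ofNat] at h
  exact h.trans (zpow_le_zpow_right₀ one_le_two (by omega))

theorem padicNorm_sum_inv_choose_sub_le (hk : 2 * k + 1 < 2 ^ e) (hke : log 2 (k + 2) < e) :
    padicNorm 2 (∑ i ∈ range (k + 1),
        ((((2 ^ e + 2 * k + 1).choose i : ℚ))⁻¹ - (((2 * k + 1).choose i : ℚ))⁻¹)) ≤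
      2 ^ (-((e : ℤ) - 2 * log 2 (k + 2) + 2 * padicValNat 2 (k + 1))) := by
  have hpairs (q : ℕ) (hq : 2 * q ≤ k + 1) := padicNorm.sum_le' (s := range q)
    (fun j hj => padicNorm_inv_choose_pair_sub_le hk hke (t := 2 * j)
      (by rw [mem_range] at hj; omega) (even_two_mul j)) (zpow_nonneg zero_le_two _)
  obtain ⟨q, hq | hq⟩ := Nat.even_or_odd' k
  · rw [show range (k + 1) = range (2 * q + 1) by congr 1; omega, sum_range_succ,
      sum_range_two_mul_eq_sum_pairs]
    refine padicNorm.nonarchimedean.trans (max_le (hpairs q (by omega)) ?_)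
    rw [← hq]
    exact padicNorm_inv_choose_self_sub_le hk hke ⟨q, by omega⟩
  · rw [show range (k + 1) = range (2 * (q + 1)) by congr 1; omega,
      sum_range_two_mul_eq_sum_pairs]
    exact hpairs (q + 1) (by omega)

end

theorem stmt_2_general (e k : ℕ) (hk : k < 2 ^ (e - 1))
    (S : ℚ)
    (hS : S = ∑ i ∈ Finset.range (k + 1),
      ((((2 ^ e + 2 * k + 1).choose i : ℚ))⁻¹ - (((2 * k + 1).choose i : ℚ))⁻¹)) :
    S = 0 ∨ padicValRat 2 S ≥
      (e : ℤ) - 2 * (Nat.log 2 (k + 2) : ℤ) + 2 * (padicValNat 2 (k + 1) : ℤ) := by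
  rcases eq_or_ne S 0 with hS0 | hS0
  · exact Or.inl hS0
  right
  have hk0 : k ≠ 0 := by rintro rfl; simp [hS] at hS0
  have he : 2 ≤ e := by
    by_contra! he
    interval_cases e <;> simp at hk <;> omega
  have hpow : 2 ^ e = 2 * 2 ^ (e - 1) := by rw [← pow_succ']; congr 1; omega
  have hk' : 2 * k + 1 < 2 ^ e := by omega
  have hke : log 2 (k + 2) < e := log_lt_of_lt_pow (by omega) (by omega)
  exact le_padicValRat_of_padicNorm_le hS0 (hS ▸ padicNorm_sum_inv_choose_sub_le hk' hke)

/-- e ≥ 1, k < 2^(e-1); S = ∑_{i=0}^k (C(2^e+2k+1,i)⁻¹ − C(2k+1,i)⁻¹) is zero or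
has 2-adic valuation ≥ e − 2·lg(k+2) + 2·ν(k+1). -/
theorem stmt_2 (e k : ℕ) (he : 1 ≤ e) (hk : k < 2 ^ (e - 1))
    (S : ℚ)
    (hS : S = ∑ i ∈ Finset.range (k + 1),
      ((((2 ^ e + 2 * k + 1).choose i : ℚ))⁻¹ - (((2 * k + 1).choose i : ℚ))⁻¹)) :
    S = 0 ∨ padicValRat 2 S ≥
      (e : ℤ) - 2 * (Nat.log 2 (k + 2) : ℤ) + 2 * (padicValNat 2 (k + 1) : ℤ) :=
  stmt_2_general e k hk S hS
end

section
/- Assume that for all natural numbers e and k with k < 2^e, either f(2^e+k) = f(k) or ν( f(2^e+k) − f(k) ) ≥ e − 2·α(k) − 2. Let x be a 2-adic integer such that the sequence j ↦ j − 2·α(x_j) (as integers) tends to +∞ as j → ∞. Then the sequence j ↦ f(x_j), viewed in ℚ₂, is a Cauchy sequence. -/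
/-!
Consecutive approximations satisfy `x_{j+1} = x_j` or `x_{j+1} = 2^j + x_j` with `x_j < 2^j`, so the
hypothesis on `f` bounds `‖f(x_{j+1}) - f(x_j)‖` by `2^{-(j - 2α(x_j) - 2)}`, which tends to `0`.
In the ultrametric field `ℚ₂` consecutive differences tending to `0` already make a sequence Cauchy.
-/

open Filter Topology

theorem tendsto_zpow_neg_atTop_nhds_zero {a : ℝ} (ha : 1 < a) :
    Tendsto (fun n : ℤ => a ^ (-n)) atTop (𝓝 0) := by
  have hpow : Tendsto (fun n : ℕ => a⁻¹ ^ n) atTop (𝓝 0) :=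
    tendsto_pow_atTop_nhds_zero_of_lt_one (by positivity) (inv_lt_one_of_one_lt₀ ha)
  have htoNat : Tendsto Int.toNat atTop atTop :=
    tendsto_atTop_atTop.2 fun n => ⟨n, fun m hm => by omega⟩
  refine (hpow.comp htoNat).congr' ?_
  filter_upwards [eventually_ge_atTop 0] with n hn
  simp [zpow_neg, ← zpow_natCast, Int.toNat_of_nonneg hn]

namespace PadicInt

variable {p : ℕ} [Fact p.Prime]

theorem exists_appr_succ_eq (x : ℤ_[p]) (j : ℕ) :
    ∃ c < p, x.appr (j + 1) = x.appr j + c * p ^ j := by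
  obtain ⟨c, hc⟩ := x.dvd_appr_sub_appr j (j + 1) j.le_succ
  have hmono : x.appr j ≤ x.appr (j + 1) := x.appr_mono j.le_succ
  refine ⟨c, ?_, by rw [mul_comm, ← hc]; omega⟩
  have hlt : p ^ j * c < p ^ j * p := by
    rw [← hc, ← pow_succ]
    exact lt_of_le_of_lt (Nat.sub_le _ _) (x.appr_lt (j + 1))
  exact Nat.lt_of_mul_lt_mul_left hlt

end PadicInt

theorem Padic.norm_ratCast_le_zpow_neg {p : ℕ} [Fact p.Prime] {q : ℚ} {m : ℤ}
    (h : q ≠ 0 → m ≤ padicValRat p q) : ‖(q : ℚ_[p])‖ ≤ (p : ℝ) ^ (-m) := by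
  have hp : (1 : ℝ) < p := mod_cast (Fact.out : p.Prime).one_lt
  rcases eq_or_ne q 0 with rfl | hq
  · simpa using zpow_nonneg (zero_le_one.trans hp.le) _
  rw [Padic.norm_eq_zpow_neg_valuation (by exact_mod_cast hq), Padic.valuation_ratCast]
  exact zpow_le_zpow_right₀ hp.le (neg_le_neg (h hq))

section DyadicStep

variable {f : ℕ → ℚ} {b : ℕ → ℕ → ℤ}

theorem norm_sub_appr_succ_le
    (hf : ∀ e k : ℕ, k < 2 ^ e → f (2 ^ e + k) = f k ∨ b e k ≤ padicValRat 2 (f (2 ^ e + k) - f k))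
    (x : ℤ_[2]) (j : ℕ) :
    ‖((f (x.appr (j + 1)) : ℚ_[2]) - f (x.appr j))‖ ≤ (2 : ℝ) ^ (-b j (x.appr j)) := by
  obtain ⟨c, hc, hsucc⟩ := x.exists_appr_succ_eq j
  interval_cases c
  · simpa [hsucc] using zpow_nonneg zero_le_two _
  · rw [hsucc, one_mul, add_comm, ← Rat.cast_sub]
    refine mod_cast Padic.norm_ratCast_le_zpow_neg fun hne => ?_
    exact (hf j _ (x.appr_lt j)).resolve_left (sub_ne_zero.mp hne)

theorem cauchySeq_ratCast_comp_appr
    (hf : ∀ e k : ℕ, k < 2 ^ e → f (2 ^ e + k) = f k ∨ b e k ≤ padicValRat 2 (f (2 ^ e + k) - f k))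
    (x : ℤ_[2]) (hx : Tendsto (fun j => b j (x.appr j)) atTop atTop) :
    CauchySeq (fun j => ((f (x.appr j) : ℚ) : ℚ_[2])) := by
  refine NonarchimedeanAddGroup.cauchySeq_of_tendsto_sub_nhds_zero ?_
  rw [tendsto_zero_iff_norm_tendsto_zero]
  exact squeeze_zero (fun _ => norm_nonneg _) (norm_sub_appr_succ_le hf x)
    ((tendsto_zpow_neg_atTop_nhds_zero one_lt_two).comp hx)

end DyadicStep

theorem stmt_4_general
    (f : ℕ → ℚ)
    (α : ℕ → ℕ)
    (hconj : ∀ e k : ℕ, k < 2 ^ e →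
      f (2 ^ e + k) = f k ∨
        padicValRat 2 (f (2 ^ e + k) - f k) ≥ (e : ℤ) - 2 * (α k : ℤ) - 2)
    (x : ℤ_[2])
    (hx : Filter.Tendsto (fun j : ℕ => (j : ℤ) - 2 * (α (x.appr j) : ℤ))
      Filter.atTop Filter.atTop) :
    CauchySeq (fun j : ℕ => ((f (x.appr j) : ℚ) : ℚ_[2])) :=
  cauchySeq_ratCast_comp_appr (b := fun e k => (e : ℤ) - 2 * (α k : ℤ) - 2) hconj x
    (tendsto_atTop_add_const_right _ (-2) hx)

/-- Proposition 1.3: assuming Conjecture 1.2, if j − 2·α(x_j) → ∞ then ⟨f(x_j)⟩ is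
Cauchy in ℚ₂. Here α(n) = number of 1's in binary, x_j = PadicInt.appr x j. -/
theorem stmt_4
    (f : ℕ → ℚ) (hf : ∀ n : ℕ, f n = ∑ i ∈ Finset.range (n + 1), ((n.choose i : ℚ))⁻¹)
    (α : ℕ → ℕ) (hα : ∀ n : ℕ, α n = (Nat.digits 2 n).count 1)
    (hconj : ∀ e k : ℕ, k < 2 ^ e →
      f (2 ^ e + k) = f k ∨
        padicValRat 2 (f (2 ^ e + k) - f k) ≥ (e : ℤ) - 2 * (α k : ℤ) - 2)
    (x : ℤ_[2])
    (hx : Filter.Tendsto (fun j : ℕ => (j : ℤ) - 2 * (α (x.appr j) : ℤ))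
      Filter.atTop Filter.atTop) :
    CauchySeq (fun j : ℕ => ((f (x.appr j) : ℚ) : ℚ_[2])) :=
  stmt_4_general f α hconj x hx
end

section
/- Assume that for all natural numbers e ≥ 1 and k with k < 2^(e-1), either f(2^e+2k+1) = f(2k+1) or ν( f(2^e+2k+1) − f(2k+1) ) ≥ e − 2·lg(k+3) + 2·ν(k+1). Let e : ℕ → ℕ be a strictly increasing sequence with e(0) = 0 such that the sequence i ↦ e(i+1) − 2·e(i) (as integers) tends to +∞, and let x ∈ ℤ₂ be the sum of the convergent series ∑_{i=0}^∞ 2^(e(i)). Then the sequence j ↦ f(x_j), viewed in ℚ₂, is a Cauchy sequence. -/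
/-!
The 2-adic digits of `x` sit at the positions `e i`, so `x_j` is the partial sum
`s n = ∑_{i<n} 2^(e i)` with `n` the number of `e i` below `j`; thus `j ↦ f(x_j)` is a
reparametrization of `n ↦ f(s n)`, and it suffices that the latter is Cauchy. Now
`s (n+2) = 2^(e (n+1)) + s (n+1)` with `s (n+1)` odd and below `2^(e n + 1)`, so the conjecture
bounds the 2-adic valuation of the consecutive difference below by `e (n+1) - 2 e n - 4`, which
tends to infinity. In the ultrametric `ℚ₂` this makes the sequence Cauchy.
-/

open Filter Topology Finset

theorem Nat.sum_range_pow_comp_lt {b : ℕ} (hb : 2 ≤ b) {e : ℕ → ℕ} (he : Function.Injective e)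
    {n j : ℕ} (h : ∀ i < n, e i < j) : ∑ i ∈ range n, b ^ e i < b ^ j := by
  rw [← sum_image he.injOn]
  exact Nat.geomSum_lt hb (by simpa using h)

theorem StrictMono.exists_lt_iff_lt {e : ℕ → ℕ} (he : StrictMono e) (j : ℕ) :
    ∃ n, ∀ i, e i < j ↔ i < n := by
  have hex : ∃ i, j ≤ e i := ⟨j, he.le_apply⟩
  refine ⟨Nat.find hex, fun i => ?_⟩
  rw [Nat.lt_find_iff]
  exact ⟨fun hi i' hi' => not_le.2 ((he.monotone hi').trans_lt hi), fun h => not_le.1 (h i le_rfl)⟩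

namespace PadicInt

variable {p : ℕ} [Fact p.Prime]

theorem appr_eq_of_sub_mem_span {x : ℤ_[p]} {j a : ℕ} (ha : a < p ^ j)
    (hx : x - a ∈ Ideal.span {(p : ℤ_[p]) ^ j}) : x.appr j = a := by
  have := zmod_congr_of_sub_mem_span j x _ _ (appr_spec j x) hx
  rwa [ZMod.natCast_eq_natCast_iff', Nat.mod_eq_of_lt (appr_lt x j), Nat.mod_eq_of_lt ha] at this

theorem summable_pow_comp {e : ℕ → ℕ} (he : Tendsto e atTop atTop) :
    Summable fun i => (p : ℤ_[p]) ^ e i := by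
  refine NonarchimedeanAddGroup.summable_of_tendsto_cofinite_zero ?_
  rw [Nat.cofinite_eq_atTop]
  refine (tendsto_pow_atTop_nhds_zero_of_norm_lt_one ?_).comp he
  rw [norm_p]
  exact inv_lt_one_of_one_lt₀ (by exact_mod_cast (Fact.out : p.Prime).one_lt)

theorem norm_tsum_pow_comp_le {e : ℕ → ℕ} {j : ℕ} (hj : ∀ i, j ≤ e i) :
    ‖∑' i, (p : ℤ_[p]) ^ e i‖ ≤ (p : ℝ) ^ (-j : ℤ) := by
  refine IsUltrametricDist.norm_tsum_le_of_forall_le_of_nonneg (by positivity) fun i => ?_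
  rw [norm_p_pow]
  exact zpow_le_zpow_right₀ (by exact_mod_cast (Fact.out : p.Prime).one_le) (by simpa using hj i)

theorem appr_tsum_pow_comp {e : ℕ → ℕ} (he : StrictMono e) {j n : ℕ}
    (hn : ∀ i, e i < j ↔ i < n) :
    (∑' i, (p : ℤ_[p]) ^ e i).appr j = ∑ i ∈ range n, p ^ e i := by
  apply appr_eq_of_sub_mem_span
  · exact Nat.sum_range_pow_comp_lt (Fact.out : p.Prime).two_le he.injective
      fun i hi => (hn i).2 hi
  · rw [← norm_le_pow_iff_mem_span_pow,
      ← (summable_pow_comp he.tendsto_atTop).sum_add_tsum_nat_add n]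
    push_cast
    rw [add_sub_cancel_left]
    exact norm_tsum_pow_comp_le fun i => not_lt.1 fun h => by have := (hn _).1 h; omega

end PadicInt

theorem Padic.tendsto_ratCast_nhds_zero {p : ℕ} [Fact p.Prime] {q : ℕ → ℚ} {v : ℕ → ℤ}
    (hv : Tendsto v atTop atTop) (hq : ∀ n, q n = 0 ∨ v n ≤ padicValRat p (q n)) :
    Tendsto (fun n => (q n : ℚ_[p])) atTop (𝓝 0) := by
  have hp : (1 : ℝ) < p := by exact_mod_cast (Fact.out : p.Prime).one_lt
  have hbound : Tendsto (fun n => (p : ℝ) ^ (-v n)) atTop (𝓝 0) := by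
    have := (tendsto_rpow_atTop_of_base_lt_one (p : ℝ)⁻¹
      (neg_one_lt_zero.trans (inv_pos.2 (zero_lt_one.trans hp))) (inv_lt_one_of_one_lt₀ hp)).comp
      (tendsto_intCast_atTop_atTop.comp hv)
    refine this.congr fun n => ?_
    simp [Real.rpow_intCast, zpow_neg]
  refine squeeze_zero_norm (fun n => ?_) hbound
  by_cases h0 : q n = 0
  · simp only [h0, Rat.cast_zero, norm_zero]
    positivity
  rw [Padic.eq_padicNorm, padicNorm.eq_zpow_of_nonzero h0]
  push_cast
  exact zpow_le_zpow_right₀ hp.le (neg_le_neg ((hq n).resolve_left h0))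

theorem Nat.odd_sum_range_two_pow {e : ℕ → ℕ} (he : StrictMono e) (he0 : e 0 = 0) (n : ℕ) :
    Odd (∑ i ∈ range (n + 1), 2 ^ e i) := by
  rw [sum_range_succ', he0, pow_zero]
  refine Even.add_one (even_sum _ fun i _ => (Nat.even_pow' ?_).2 even_two)
  have : e 0 < e (i + 1) := he i.succ_pos
  omega

-- Conjecture 1.4 of the paper.
def TwoAdicShiftBound (f : ℕ → ℚ) : Prop :=
  ∀ e k : ℕ, 1 ≤ e → k < 2 ^ (e - 1) →
    f (2 ^ e + 2 * k + 1) = f (2 * k + 1) ∨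
      padicValRat 2 (f (2 ^ e + 2 * k + 1) - f (2 * k + 1)) ≥
        (e : ℤ) - 2 * (Nat.log 2 (k + 3) : ℤ) + 2 * (padicValNat 2 (k + 1) : ℤ)

theorem TwoAdicShiftBound.sub_eq_zero_or_le_padicValRat {f : ℕ → ℚ} (hf : TwoAdicShiftBound f)
    {a b m : ℕ} (hab : a < b) (hm : Odd m) (hma : m < 2 ^ (a + 1)) :
    f (2 ^ b + m) - f m = 0 ∨ (b : ℤ) - 2 * a - 4 ≤ padicValRat 2 (f (2 ^ b + m) - f m) := by
  obtain ⟨k, rfl⟩ := hm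
  have hk : k < 2 ^ a := by rw [pow_succ] at hma; omega
  have hlog : Nat.log 2 (k + 3) < a + 2 :=
    Nat.log_lt_of_lt_pow (by omega) (by rw [pow_succ, pow_succ]; omega)
  rw [← add_assoc]
  refine (hf b k (by omega) (hk.trans_le (Nat.pow_le_pow_right two_pos (by omega)))).imp
    sub_eq_zero.2 fun h => ?_
  omega

theorem stmt_5_general
    (f : ℕ → ℚ)
    (hconj : ∀ e k : ℕ, 1 ≤ e → k < 2 ^ (e - 1) →
      f (2 ^ e + 2 * k + 1) = f (2 * k + 1) ∨
        padicValRat 2 (f (2 ^ e + 2 * k + 1) - f (2 * k + 1)) ≥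
          (e : ℤ) - 2 * (Nat.log 2 (k + 3) : ℤ) + 2 * (padicValNat 2 (k + 1) : ℤ))
    (e : ℕ → ℕ) (hmono : StrictMono e) (he0 : e 0 = 0)
    (hgap : Filter.Tendsto (fun i : ℕ => (e (i + 1) : ℤ) - 2 * (e i : ℤ))
      Filter.atTop Filter.atTop)
    (x : ℤ_[2]) (hx : x = ∑' i : ℕ, (2 : ℤ_[2]) ^ (e i)) :
    CauchySeq (fun j : ℕ => ((f (x.appr j) : ℚ) : ℚ_[2])) := by
  set s : ℕ → ℕ := fun n => ∑ i ∈ range n, 2 ^ e i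
  have hs_succ (n : ℕ) : s (n + 1) = 2 ^ e n + s n := sum_range_succ_comm _ n
  choose N hN using hmono.exists_lt_iff_lt
  have hN_tendsto : Tendsto N atTop atTop :=
    tendsto_atTop_atTop.2 fun i => ⟨e i + 1, fun j hj => ((hN j i).1 (by omega)).le⟩
  have happr (j : ℕ) : x.appr j = s (N j) := hx ▸ PadicInt.appr_tsum_pow_comp hmono (hN j)
  have hstep (i : ℕ) : f (s (i + 2)) - f (s (i + 1)) = 0 ∨
      (e (i + 1) : ℤ) - 2 * e i - 4 ≤ padicValRat 2 (f (s (i + 2)) - f (s (i + 1))) := by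
    rw [hs_succ (i + 1)]
    exact TwoAdicShiftBound.sub_eq_zero_or_le_padicValRat hconj (hmono i.lt_succ_self)
      (Nat.odd_sum_range_two_pow hmono he0 i) (Nat.sum_range_pow_comp_lt le_rfl hmono.injective
        fun i' hi' => Nat.lt_succ_of_le (hmono.monotone (by omega)))
  have hcauchy : CauchySeq fun n => (f (s n) : ℚ_[2]) := by
    refine NonarchimedeanAddGroup.cauchySeq_of_tendsto_sub_nhds_zero
      ((tendsto_add_atTop_iff_nat 1).1 ?_)
    have hv := (tendsto_atTop_add_const_right _ (-4) hgap).congr fun i => (sub_eq_add_neg _ _).symm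
    simpa using Padic.tendsto_ratCast_nhds_zero hv hstep
  simp_rw [happr]
  exact hcauchy.comp_tendsto hN_tendsto

/-- Proposition 1.5: assuming Conjecture 1.4, if x = ∑ 2^{e i} with e strictly
increasing, e 0 = 0, and e(i+1) − 2·e(i) → ∞, then ⟨f(x_j)⟩ is Cauchy in ℚ₂. -/
theorem stmt_5
    (f : ℕ → ℚ) (hf : ∀ n : ℕ, f n = ∑ i ∈ Finset.range (n + 1), ((n.choose i : ℚ))⁻¹)
    (hconj : ∀ e k : ℕ, 1 ≤ e → k < 2 ^ (e - 1) →
      f (2 ^ e + 2 * k + 1) = f (2 * k + 1) ∨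
        padicValRat 2 (f (2 ^ e + 2 * k + 1) - f (2 * k + 1)) ≥
          (e : ℤ) - 2 * (Nat.log 2 (k + 3) : ℤ) + 2 * (padicValNat 2 (k + 1) : ℤ))
    (e : ℕ → ℕ) (hmono : StrictMono e) (he0 : e 0 = 0)
    (hgap : Filter.Tendsto (fun i : ℕ => (e (i + 1) : ℤ) - 2 * (e i : ℤ))
      Filter.atTop Filter.atTop)
    (x : ℤ_[2]) (hx : x = ∑' i : ℕ, (2 : ℤ_[2]) ^ (e i)) :
    CauchySeq (fun j : ℕ => ((f (x.appr j) : ℚ) : ℚ_[2])) :=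
  stmt_5_general f hconj e hmono he0 hgap x hx
end

section
/- For all natural numbers k and i with i ≤ k, the 2-adic valuation of the binomial coefficient C(k,i) satisfies ν(C(k,i)) ≤ lg(k+1) − ν(k+1). -/
/-!
By Kummer's theorem, `ν_p (C(n, k))` counts the carries when `k` and `n - k` are added in base `p`.
If `p ^ j ∣ n + 1`, the last `j` digits of `n` all equal `p - 1`, so no carry can occur in those
positions; the carries therefore lie in positions `ν_p (n + 1) < j ≤ log_p (n + 1)`.
-/

open Finset

namespace Nat

theorem mod_add_sub_mod_lt_of_dvd_add_one {q n k : ℕ} (hkn : k ≤ n) (hq : q ∣ n + 1) :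
    k % q + (n - k) % q < q := by
  have hq0 : 0 < q := Nat.pos_of_dvd_of_pos hq n.succ_pos
  have hn : n % q = q - 1 := by
    have hmod : n ≡ q - 1 [MOD q] :=
      Nat.ModEq.add_right_cancel' 1 <| by
        rw [Nat.sub_add_cancel hq0]
        exact (Nat.modEq_zero_iff_dvd.mpr hq).trans (Nat.modEq_zero_iff_dvd.mpr dvd_rfl).symm
    rw [hmod, Nat.mod_eq_of_lt (Nat.sub_lt hq0 one_pos)]
  have hsum := Nat.add_mod_add_ite k (n - k) q
  rw [Nat.add_sub_cancel' hkn, hn] at hsum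
  have := Nat.mod_lt k hq0
  have := Nat.mod_lt (n - k) hq0
  split_ifs at hsum <;> omega

theorem padicValNat_choose_add_padicValNat_add_one_le (p : ℕ) [Fact p.Prime] (n k : ℕ) :
    padicValNat p (n.choose k) + padicValNat p (n + 1) ≤ log p (n + 1) := by
  set L := log p (n + 1)
  set ν := padicValNat p (n + 1)
  have hνL : ν ≤ L := padicValNat_le_nat_log _
  rcases lt_or_ge n k with hnk | hkn
  · simpa [choose_eq_zero_of_lt hnk] using hνL
  rw [padicValNat_choose hkn (b := L + 1) (Nat.lt_succ_of_le (log_mono_right n.le_succ))]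
  have hcarries :
      {j ∈ Ico 1 (L + 1) | p ^ j ≤ k % p ^ j + (n - k) % p ^ j} ⊆ Ico (ν + 1) (L + 1) := by
    intro j
    simp only [mem_filter, mem_Ico]
    rintro ⟨⟨-, hjL⟩, hcarry⟩
    refine ⟨?_, hjL⟩
    by_contra! hjν
    have hdvd : p ^ j ∣ n + 1 := (pow_dvd_pow p (by omega)).trans pow_padicValNat_dvd
    exact (mod_add_sub_mod_lt_of_dvd_add_one hkn hdvd).not_ge hcarry
  have := card_le_card hcarries
  rw [card_Ico] at this
  omega

end Nat

theorem stmt_6_general (k i : ℕ) :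
    (padicValNat 2 (k.choose i) : ℤ) ≤
      (Nat.log 2 (k + 1) : ℤ) - (padicValNat 2 (k + 1) : ℤ) := by
  have := Nat.padicValNat_choose_add_padicValNat_add_one_le 2 k i
  omega

/-- Inequality (1.1): ν(C(k,i)) ≤ lg(k+1) − ν(k+1) for i ≤ k. -/
theorem stmt_6 (k i : ℕ) (h : i ≤ k) :
    (padicValNat 2 (k.choose i) : ℤ) ≤
      (Nat.log 2 (k + 1) : ℤ) - (padicValNat 2 (k + 1) : ℤ) :=
  stmt_6_general k i
end

section
/- Let a, b, e be natural numbers with 1 ≤ b ≤ a. Then in ℚ: C(2^e+a, b)⁻¹ − C(a, b)⁻¹ = −C(2^e+a, b)⁻¹ · ∑_{j=1}^{b} 2^(j·e) · σ_j(1/a, 1/(a−1), …, 1/(a−b+1)), where σ_j denotes the j-th elementary symmetric polynomial in the b listed rational arguments. -/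
/-!
Writing `C(n, b) = n (n - 1) ⋯ (n - b + 1) / b!`, the factor `2^e + a - m` of `C(2^e + a, b)` is
`(a - m) (1 + 2^e / (a - m))`, so `C(2^e + a, b) = C(a, b) ∏_{m < b} (1 + 2^e / (a - m))`.
Expanding the product gives `1 + ∑_{j ≥ 1} 2^(j e) σ_j(1/a, …, 1/(a - b + 1))`, and the identity
follows by dividing by `C(a, b) C(2^e + a, b)`.
-/

open Finset

theorem Finset.prod_one_add_mul_eq_one_add_sum_powersetCard {ι R : Type*} [CommSemiring R]
    (s : Finset ι) (c : R) (f : ι → R) :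
    ∏ i ∈ s, (1 + c * f i) =
      1 + ∑ j ∈ Icc 1 #s, c ^ j * ∑ t ∈ s.powersetCard j, ∏ i ∈ t, f i := by
  rw [prod_one_add, sum_powerset, range_eq_Ico, sum_eq_sum_Ico_succ_bot (Nat.succ_pos _)]
  simp only [powersetCard_zero, sum_singleton, prod_empty, mul_sum]
  congr 1
  refine sum_congr rfl fun j _ => sum_congr rfl fun t ht => ?_
  rw [prod_mul_distrib, prod_const, (mem_powersetCard.1 ht).2]

theorem Nat.cast_choose_add_eq_mul_prod {K : Type*} [Field K] [CharZero K] {a b : ℕ} (c : ℕ)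
    (hba : b ≤ a) :
    ((c + a).choose b : K) =
      a.choose b * ∏ m ∈ range b, (1 + c * ((a - m : ℕ) : K)⁻¹) := by
  have hfact : (b.factorial : K) ≠ 0 := by exact_mod_cast b.factorial_ne_zero
  refine mul_left_cancel₀ hfact ?_
  rw [← mul_assoc, ← Nat.cast_mul, ← Nat.cast_mul, ← descFactorial_eq_factorial_mul_choose,
    ← descFactorial_eq_factorial_mul_choose, descFactorial_eq_prod_range,
    descFactorial_eq_prod_range, Nat.cast_prod, Nat.cast_prod, ← prod_mul_distrib]
  refine prod_congr rfl fun m hm => ?_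
  have hma : m < a := (mem_range.1 hm).trans_le hba
  have hne : ((a - m : ℕ) : K) ≠ 0 := by exact_mod_cast (Nat.sub_pos_of_lt hma).ne'
  rw [Nat.add_sub_assoc hma.le, Nat.cast_add, mul_add, mul_one, mul_left_comm,
    mul_inv_cancel₀ hne, mul_one, add_comm]

theorem stmt_7_general (a b e : ℕ) (hba : b ≤ a) :
    (((2 ^ e + a).choose b : ℚ))⁻¹ - ((a.choose b : ℚ))⁻¹ =
      -(((2 ^ e + a).choose b : ℚ))⁻¹ *
        ∑ j ∈ Finset.Icc 1 b, (2 : ℚ) ^ (j * e) *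
          ∑ A ∈ (Finset.range b).powersetCard j, ∏ m ∈ A, (((a - m : ℕ) : ℚ))⁻¹ := by
  have hexpand := Nat.cast_choose_add_eq_mul_prod (K := ℚ) (2 ^ e) hba
  rw [Nat.cast_pow, Nat.cast_ofNat, prod_one_add_mul_eq_one_add_sum_powersetCard, card_range]
    at hexpand
  simp only [mul_comm _ e, pow_mul]
  have hCa : (a.choose b : ℚ) ≠ 0 := by exact_mod_cast (Nat.choose_pos hba).ne'
  have hC : ((2 ^ e + a).choose b : ℚ) ≠ 0 := by
    exact_mod_cast (Nat.choose_pos (hba.trans (Nat.le_add_left a _))).ne'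
  rw [hexpand] at hC ⊢
  have hP := right_ne_zero_of_mul hC
  field_simp
  ring

/-- Identity (2.2): for 1 ≤ b ≤ a,
C(2^e+a,b)⁻¹ − C(a,b)⁻¹ = −C(2^e+a,b)⁻¹ ∑_{j=1}^b 2^{je} σ_j(1/a, …, 1/(a−b+1)),
where σ_j is the j-th elementary symmetric polynomial, here expressed as a sum
over j-element subsets A of {0,…,b−1} of ∏_{m∈A} 1/(a−m). -/
theorem stmt_7 (a b e : ℕ) (hb : 1 ≤ b) (hba : b ≤ a) :
    (((2 ^ e + a).choose b : ℚ))⁻¹ - ((a.choose b : ℚ))⁻¹ =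
      -(((2 ^ e + a).choose b : ℚ))⁻¹ *
        ∑ j ∈ Finset.Icc 1 b, (2 : ℚ) ^ (j * e) *
          ∑ A ∈ (Finset.range b).powersetCard j, ∏ m ∈ A, (((a - m : ℕ) : ℚ))⁻¹ :=
  stmt_7_general a b e hba
end

section
/- For every natural number ℓ ≥ 1, the rational number ∑_{n=2ℓ+2}^{4ℓ+1} 1/n is nonzero and its 2-adic valuation equals −lg(ℓ) − 2. -/
/-- For ℓ ≥ 1, ∑_{n=2ℓ+2}^{4ℓ+1} 1/n is nonzero with 2-adic valuation −lg(ℓ) − 2. -/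
theorem stmt_8 (ℓ : ℕ) (hℓ : 1 ≤ ℓ) :
    (∑ n ∈ Finset.Icc (2 * ℓ + 2) (4 * ℓ + 1), (1 / (n : ℚ))) ≠ 0 ∧
      padicValRat 2 (∑ n ∈ Finset.Icc (2 * ℓ + 2) (4 * ℓ + 1), (1 / (n : ℚ))) =
        -(Nat.log 2 ℓ : ℤ) - 2 := by
  have : Fact (Nat.Prime 2) := ⟨Nat.prime_two⟩
  set k := Nat.log 2 ℓ with hkdef
  have hk1 : 2 ^ k ≤ ℓ := Nat.pow_log_le_self 2 (by omega)
  have hk2 : ℓ < 2 ^ (k + 1) := Nat.lt_pow_succ_log_self one_lt_two ℓ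
  have hpow1 : 2 ^ (k + 1) = 2 * 2 ^ k := by ring
  have hpow2 : 2 ^ (k + 2) = 4 * 2 ^ k := by ring
  set m := 2 ^ (k + 2) with hmdef
  set S := Finset.Icc (2 * ℓ + 2) (4 * ℓ + 1) with hSdef
  set G : ℕ → ℚ := fun i => ((max i 1 : ℕ) : ℚ)⁻¹ with hGdef
  have hGpos : ∀ i, 0 < G i := by
    intro i
    have : (0 : ℚ) < ((max i 1 : ℕ) : ℚ) := by positivity
    exact inv_pos.mpr this
  have hGeq : ∀ i, 1 ≤ i → G i = 1 / (i : ℚ) := by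
    intro i hi
    show ((max i 1 : ℕ) : ℚ)⁻¹ = 1 / (i : ℚ)
    rw [Nat.max_eq_left hi, one_div]
  have hsum_eq : (∑ n ∈ S, (1 / (n : ℚ))) = ∑ n ∈ S, G n := by
    refine Finset.sum_congr rfl ?_
    intro n hn
    rw [Finset.mem_Icc] at hn
    exact (hGeq n (by omega)).symm
  have hmmem : m ∈ S := by
    rw [hSdef, Finset.mem_Icc]
    omega
  -- valuation of G m
  have hvalm : padicValRat 2 (G m) = -(k + 2 : ℤ) := by
    rw [hGeq m (Nat.one_le_two_pow), one_div, padicValRat.inv, padicValRat.of_nat,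
      hmdef, padicValNat.prime_pow]
    push_cast; ring
  -- valuation of G i for other i
  have hvali : ∀ i ∈ S.erase m, padicValRat 2 (G m) < padicValRat 2 (G i) := by
    intro i hi
    have hiS : i ∈ S := Finset.mem_of_mem_erase hi
    have hine : i ≠ m := Finset.ne_of_mem_erase hi
    rw [hSdef, Finset.mem_Icc] at hiS
    have hi1 : 1 ≤ i := by omega
    have hnotdvd : ¬ (2 ^ (k + 2) ∣ i) := by
      rintro ⟨c, rfl⟩
      rcases Nat.lt_or_ge c 2 with hc | hc
      · interval_cases c <;> omega
      · have : 2 ^ (k + 2) * 2 ≤ 2 ^ (k + 2) * c := Nat.mul_le_mul_left _ hc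
        omega
    have hvlt : padicValNat 2 i < k + 2 := by
      by_contra h
      push_neg at h
      exact hnotdvd (dvd_trans (pow_dvd_pow 2 h) (pow_padicValNat_dvd))
    rw [hvalm, hGeq i hi1, one_div, padicValRat.inv, padicValRat.of_nat]
    omega
  have herase_ne : (S.erase m).Nonempty := by
    rw [← Finset.card_pos, Finset.card_erase_of_mem hmmem, hSdef, Nat.card_Icc]
    omega
  have hrest_pos : (0 : ℚ) < ∑ i ∈ S.erase m, G i :=
    Finset.sum_pos (fun i _ => hGpos i) herase_ne
  have hlt : padicValRat 2 (G m) < padicValRat 2 (∑ i ∈ S.erase m, G i) :=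
    padicValRat.lt_sum_of_lt herase_ne hvali hGpos
  have hsplit : (∑ n ∈ S, G n) = G m + ∑ i ∈ S.erase m, G i :=
    (Finset.add_sum_erase S G hmmem).symm
  have hpos : (0 : ℚ) < ∑ n ∈ S, G n := Finset.sum_pos (fun i _ => hGpos i) ⟨m, hmmem⟩
  constructor
  · rw [hsum_eq]; exact hpos.ne'
  · rw [hsum_eq, hsplit,
      padicValRat.add_eq_of_lt (by rw [← hsplit]; exact hpos.ne') (hGpos m).ne'
        hrest_pos.ne' hlt, hvalm]
    ring
end

section
/- Let x₁, …, x_b be nonzero rational numbers and t an integer such that ν(x_m) ≥ −t for every m, and at most one index m has ν(x_m) = −t. Then for every j with 2 ≤ j ≤ b, the j-th elementary symmetric polynomial σ_j(x₁,…,x_b) is either zero or satisfies ν(σ_j(x₁,…,x_b)) ≥ −j·t + (j−1); in particular ν(σ_j(x₁,…,x_b)) > −j·t. -/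
private lemma padicValRat_prod {ι : Type*} (s : Finset ι) (f : ι → ℚ)
    (hf : ∀ i ∈ s, f i ≠ 0) :
    padicValRat 2 (∏ i ∈ s, f i) = ∑ i ∈ s, padicValRat 2 (f i) := by
  classical
  induction s using Finset.cons_induction with
  | empty => simp
  | cons a s ha ih =>
    rw [Finset.prod_cons, Finset.sum_cons,
      padicValRat.mul (hf a (Finset.mem_cons_self a s))
        (Finset.prod_ne_zero_iff.2 fun i hi => hf i (Finset.mem_cons_of_mem hi)),
      ih (fun i hi => hf i (Finset.mem_cons_of_mem hi))]

private lemma padicValRat_sum_ge {ι : Type*} (s : Finset ι) (f : ι → ℚ) (c : ℤ)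
    (h : ∀ i ∈ s, f i = 0 ∨ c ≤ padicValRat 2 (f i)) :
    (∑ i ∈ s, f i) = 0 ∨ c ≤ padicValRat 2 (∑ i ∈ s, f i) := by
  classical
  induction s using Finset.cons_induction with
  | empty => simp
  | cons a s ha ih =>
    rw [Finset.sum_cons]
    rcases h a (Finset.mem_cons_self a s) with h0 | hc
    · rw [h0, zero_add]
      exact ih fun i hi => h i (Finset.mem_cons_of_mem hi)
    · rcases ih (fun i hi => h i (Finset.mem_cons_of_mem hi)) with h0 | hS
      · rw [h0, add_zero]; exact Or.inr hc
      · by_cases hz : f a + ∑ i ∈ s, f i = 0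
        · exact Or.inl hz
        · exact Or.inr (le_trans (le_min hc hS) (padicValRat.min_le_padicValRat_add hz))

/-- If x₁,…,x_b are nonzero rationals with ν(x_m) ≥ −t for all m and at most one m
with ν(x_m) = −t, then for 2 ≤ j ≤ b, σ_j(x₁,…,x_b) is zero or has 2-adic valuation
≥ −j·t + (j−1), and in particular > −j·t. σ_j is the sum over j-element subsets. -/
theorem stmt_10 (b : ℕ) (x : Fin b → ℚ) (t : ℤ)
    (hx0 : ∀ m : Fin b, x m ≠ 0)
    (hge : ∀ m : Fin b, padicValRat 2 (x m) ≥ -t)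
    (huniq : ∀ m m' : Fin b, padicValRat 2 (x m) = -t → padicValRat 2 (x m') = -t → m = m')
    (j : ℕ) (hj2 : 2 ≤ j) (hjb : j ≤ b) :
    (∑ A ∈ (Finset.univ : Finset (Fin b)).powersetCard j, ∏ m ∈ A, x m) = 0 ∨
      (padicValRat 2 (∑ A ∈ (Finset.univ : Finset (Fin b)).powersetCard j, ∏ m ∈ A, x m) ≥
          -(j : ℤ) * t + ((j : ℤ) - 1) ∧
        padicValRat 2 (∑ A ∈ (Finset.univ : Finset (Fin b)).powersetCard j, ∏ m ∈ A, x m) >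
          -(j : ℤ) * t) := by
  classical
  have key : ∀ A ∈ (Finset.univ : Finset (Fin b)).powersetCard j,
      (∏ m ∈ A, x m) = 0 ∨ -(j : ℤ) * t + ((j : ℤ) - 1) ≤ padicValRat 2 (∏ m ∈ A, x m) := by
    intro A hA
    right
    rw [padicValRat_prod A x (fun i _ => hx0 i)]
    have hcard : A.card = j := (Finset.mem_powersetCard.1 hA).2
    set B := A.filter (fun m => padicValRat 2 (x m) = -t) with hB
    have hBcard : B.card ≤ 1 := by
      refine Finset.card_le_one.2 fun m hm m' hm' => ?_
      exact huniq m m' (Finset.mem_filter.1 hm).2 (Finset.mem_filter.1 hm').2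
    have hterm : ∀ m ∈ A, (-t + 1) - (if padicValRat 2 (x m) = -t then 1 else 0)
        ≤ padicValRat 2 (x m) := by
      intro m _
      by_cases hm : padicValRat 2 (x m) = -t
      · simp [hm]
      · simp only [hm, if_false, sub_zero]
        have := hge m
        omega
    calc -(j : ℤ) * t + ((j : ℤ) - 1)
        ≤ ∑ m ∈ A, ((-t + 1) - (if padicValRat 2 (x m) = -t then 1 else 0)) := by
          rw [Finset.sum_sub_distrib, Finset.sum_const, hcard, Finset.sum_boole]
          have : ((A.filter (fun m => padicValRat 2 (x m) = -t)).card : ℤ) ≤ 1 := by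
            exact_mod_cast hBcard
          rw [nsmul_eq_mul]
          push_cast
          linarith [this]
      _ ≤ ∑ m ∈ A, padicValRat 2 (x m) := Finset.sum_le_sum hterm
  rcases padicValRat_sum_ge _ _ _ key with h0 | hge'
  · exact Or.inl h0
  · refine Or.inr ⟨hge', lt_of_lt_of_le ?_ hge'⟩
    have : (2 : ℤ) ≤ (j : ℤ) := by exact_mod_cast hj2
    omega
end

section
/- Let e ≥ 1 and ℓ ≥ 1 be natural numbers with 2ℓ < 2^(e-1). Then the rational number T = C(2^e+4ℓ+1, 2ℓ)⁻¹ − C(4ℓ+1, 2ℓ)⁻¹ is nonzero and ν(T) = e − α(ℓ) − lg(ℓ) − 2. -/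
/-! With `A = C(2^e+4ℓ+1, 2ℓ)` and `B = C(4ℓ+1, 2ℓ)`, ascending factorials give
`A / B = ∏_{2ℓ+2 ≤ j ≤ 4ℓ+1} (1 + 2^e / j)`. In this range `j = 2^(lg ℓ + 2)` is the only number of
maximal 2-adic valuation, so 2-adically `A / B - 1` is dominated by the single term
`2^e / 2^(lg ℓ + 2)` and `|A / B| = 1`. Hence `|A⁻¹ - B⁻¹| = |A / B - 1| / |B|`, and Kummer's
theorem gives `ν(B) = α(ℓ)`. -/

open Finset

namespace List

theorem count_one_eq_sum_of_forall_lt_two :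
    ∀ {L : List ℕ}, (∀ x ∈ L, x < 2) → L.count 1 = L.sum
  | [], _ => rfl
  | a :: t, h => by
    have ha : a < 2 := h a mem_cons_self
    rw [count_cons, sum_cons,
      count_one_eq_sum_of_forall_lt_two fun x hx => h x (mem_cons_of_mem a hx)]
    interval_cases a <;> simp [add_comm]

end List

namespace Nat

theorem count_one_digits_two (n : ℕ) : (digits 2 n).count 1 = (digits 2 n).sum :=
  List.count_one_eq_sum_of_forall_lt_two fun _ hx => digits_lt_base one_lt_two hx

theorem sum_digits_two_two_mul (n : ℕ) : (digits 2 (2 * n)).sum = (digits 2 n).sum := by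
  rcases eq_or_ne n 0 with rfl | hn
  · rfl
  · simpa using congrArg List.sum (digits_add 2 one_lt_two 0 n two_pos (Or.inr hn))

theorem sum_digits_two_two_mul_add_one (n : ℕ) :
    (digits 2 (2 * n + 1)).sum = (digits 2 n).sum + 1 := by
  rw [add_comm, digits_add 2 one_lt_two 1 n one_lt_two (Or.inl one_ne_zero), List.sum_cons,
    add_comm]

theorem padicValNat_two_choose_four_mul_add_one_two_mul (n : ℕ) :
    padicValNat 2 ((4 * n + 1).choose (2 * n)) = (digits 2 n).sum := by
  have h := sub_one_mul_padicValNat_choose_eq_sub_sum_digits' (p := 2) (k := 2 * n)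
    (n := 2 * n + 1)
  simp only [show 2 * n + 1 + 2 * n = 2 * (2 * n) + 1 by ring, sum_digits_two_two_mul_add_one,
    sum_digits_two_two_mul] at h
  rw [show 4 * n + 1 = 2 * (2 * n) + 1 by ring]
  omega

theorem padicValNat_two_lt_of_lt_two_pow_succ {j m : ℕ} (hj : j ≠ 0) (hjm : j < 2 ^ (m + 1))
    (hne : j ≠ 2 ^ m) : padicValNat 2 j < m := by
  by_contra! hle
  obtain ⟨c, rfl⟩ : 2 ^ m ∣ j := (pow_dvd_pow 2 hle).trans pow_padicValNat_dvd
  have hc : c < 2 := by rw [pow_succ] at hjm; exact lt_of_mul_lt_mul_left' hjm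
  interval_cases c <;> simp_all

theorem cast_choose_add_eq_mul_prod_s11 (x n k : ℕ) :
    ((x + n + k).choose k : ℚ) =
      (n + k).choose k * ∏ j ∈ Ico (n + 1) (n + k + 1), (1 + x / j : ℚ) := by
  have hA := ascFactorial_eq_factorial_mul_choose (x + n) k
  have hB := ascFactorial_eq_factorial_mul_choose n k
  rw [ascFactorial_eq_prod_range] at hA hB
  have hk : (k ! : ℚ) ≠ 0 := by positivity
  apply mul_left_cancel₀ hk
  rw [prod_Ico_eq_prod_range, show n + k + 1 - (n + 1) = k by omega, ← mul_assoc]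
  rw [← Nat.cast_mul, ← hA, ← Nat.cast_mul, ← hB, Nat.cast_prod, Nat.cast_prod,
    ← prod_mul_distrib]
  refine prod_congr rfl fun i _ => ?_
  push_cast
  field_simp
  ring

theorem two_pow_log_add_two_bounds {n : ℕ} (hn : n ≠ 0) :
    2 * n + 2 ≤ 2 ^ (log 2 n + 2) ∧ 2 ^ (log 2 n + 2) < 4 * n + 2 ∧
      4 * n + 2 ≤ 2 ^ (log 2 n + 2 + 1) := by
  have hlo : 2 ^ log 2 n ≤ n := pow_log_le_self 2 hn
  have hhi : n < 2 ^ (log 2 n + 1) := lt_pow_succ_log_self one_lt_two n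
  simp only [pow_succ] at hhi ⊢
  omega

end Nat

namespace padicNorm

variable {p : ℕ} [Fact p.Prime] {ι : Type*}

theorem prod_one_add_sub_one_lt {s : Finset ι} {y : ι → ℚ} {r : ℚ} (hr0 : 0 < r) (hr1 : r ≤ 1)
    (hy : ∀ i ∈ s, padicNorm p (y i) < r) : padicNorm p (∏ i ∈ s, (1 + y i) - 1) < r := by
  induction s using Finset.cons_induction with
  | empty => simpa using hr0
  | cons a s ha ih =>
    rw [forall_mem_cons] at hy
    rw [prod_cons]
    set Q := ∏ i ∈ s, (1 + y i)
    have hQ1 : padicNorm p Q ≤ 1 := by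
      calc padicNorm p Q = padicNorm p (1 + (Q - 1)) := by ring_nf
        _ ≤ max (padicNorm p 1) (padicNorm p (Q - 1)) := padicNorm.nonarchimedean
        _ ≤ 1 := by simpa using ((ih hy.2).trans_le hr1).le
    calc padicNorm p ((1 + y a) * Q - 1)
        = padicNorm p (y a * Q + (Q - 1)) := by ring_nf
      _ ≤ max (padicNorm p (y a * Q)) (padicNorm p (Q - 1)) := padicNorm.nonarchimedean
      _ < r := by
        rw [max_lt_iff, padicNorm.mul]
        exact ⟨(mul_le_of_le_one_right (padicNorm.nonneg _) hQ1).trans_lt hy.1, ih hy.2⟩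

theorem eq_one_of_sub_one_lt_one {q : ℚ} (hq : padicNorm p (q - 1) < 1) : padicNorm p q = 1 := by
  rw [← add_sub_cancel (1 : ℚ) q, add_eq_max_of_ne, padicNorm.one, max_eq_left hq.le]
  rw [padicNorm.one]
  exact hq.ne'

theorem prod_one_add_eq_one {s : Finset ι} {y : ι → ℚ} (hy : ∀ i ∈ s, padicNorm p (y i) < 1) :
    padicNorm p (∏ i ∈ s, (1 + y i)) = 1 :=
  eq_one_of_sub_one_lt_one (prod_one_add_sub_one_lt one_pos le_rfl hy)

theorem prod_one_add_sub_one_of_dominant [DecidableEq ι] {s : Finset ι} {y : ι → ℚ} {a : ι}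
    (ha : a ∈ s) (hya0 : y a ≠ 0) (hya1 : padicNorm p (y a) ≤ 1)
    (hy : ∀ i ∈ s, i ≠ a → padicNorm p (y i) < padicNorm p (y a)) :
    padicNorm p (∏ i ∈ s, (1 + y i) - 1) = padicNorm p (y a) := by
  have hrest : ∀ i ∈ s.erase a, padicNorm p (y i) < padicNorm p (y a) := fun i hi =>
    hy i (mem_of_mem_erase hi) (ne_of_mem_erase hi)
  set Q := ∏ i ∈ s.erase a, (1 + y i)
  have hQ : padicNorm p Q = 1 := prod_one_add_eq_one fun i hi => (hrest i hi).trans_le hya1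
  have hQ1 : padicNorm p (Q - 1) < padicNorm p (y a) :=
    prod_one_add_sub_one_lt ((padicNorm.nonneg _).lt_of_ne (padicNorm.nonzero hya0).symm) hya1
      hrest
  rw [← mul_prod_erase s _ ha, show (1 + y a) * Q - 1 = y a * Q + (Q - 1) by ring,
    add_eq_max_of_ne] <;> rw [padicNorm.mul, hQ, mul_one]
  · exact max_eq_left hQ1.le
  · exact hQ1.ne'

theorem pow_div_natCast (e : ℕ) {j : ℕ} (hj : j ≠ 0) :
    padicNorm p ((p : ℚ) ^ e / j) = (p : ℚ) ^ ((padicValNat p j : ℤ) - e) := by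
  have hp : (p : ℚ) ≠ 0 := by exact_mod_cast (Fact.out : p.Prime).ne_zero
  rw [padicNorm.eq_zpow_of_nonzero (by positivity), padicValRat.div (by positivity) (by positivity),
    padicValRat.pow, padicValRat.self (Fact.out : p.Prime).one_lt, padicValRat.of_nat]
  ring_nf

theorem padicValRat_eq_of_padicNorm_eq {q : ℚ} {v : ℤ} (h : padicNorm p q = (p : ℚ) ^ (-v)) :
    q ≠ 0 ∧ padicValRat p q = v := by
  have hp : 1 < (p : ℚ) := by exact_mod_cast (Fact.out : p.Prime).one_lt
  have hq : q ≠ 0 := by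
    rintro rfl
    exact zpow_ne_zero _ (by positivity) (h.symm.trans padicNorm.zero)
  refine ⟨hq, ?_⟩
  rw [padicNorm.eq_zpow_of_nonzero hq] at h
  exact neg_inj.mp (zpow_right_injective₀ (by positivity) hp.ne' h)

end padicNorm

theorem padicNorm_two_choose_four_mul_add_one_two_mul (n : ℕ) :
    padicNorm 2 ((4 * n + 1).choose (2 * n) : ℚ) = 2 ^ (-((Nat.digits 2 n).count 1 : ℤ)) := by
  rw [padicNorm.eq_zpow_of_nonzero (by exact_mod_cast (Nat.choose_pos (by omega)).ne'),
    padicValRat.of_nat, Nat.padicValNat_two_choose_four_mul_add_one_two_mul,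
    Nat.count_one_digits_two, Nat.cast_ofNat]

theorem padicNorm_two_prod_Ico_one_add_two_pow_div_sub_one {a b m e : ℕ} (ha : 0 < a)
    (ham : a ≤ 2 ^ m) (hmb : 2 ^ m < b) (hb : b ≤ 2 ^ (m + 1)) (hme : m < e) :
    padicNorm 2 (∏ j ∈ Ico a b, (1 + (2 : ℚ) ^ e / j) - 1) = 2 ^ ((m : ℤ) - e) := by
  have hy : ∀ j ∈ Ico a b, padicNorm 2 ((2 : ℚ) ^ e / j) = 2 ^ ((padicValNat 2 j : ℤ) - e) :=
    fun j hj => by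
      simpa using padicNorm.pow_div_natCast (p := 2) e (j := j) (by simp at hj; omega)
  have hm : 2 ^ m ∈ Ico a b := mem_Ico.mpr ⟨ham, hmb⟩
  have hym : padicNorm 2 ((2 : ℚ) ^ e / (2 ^ m : ℕ)) = 2 ^ ((m : ℤ) - e) := by
    rw [hy _ hm, padicValNat.prime_pow]
  rw [← hym]
  refine padicNorm.prod_one_add_sub_one_of_dominant hm (by positivity) ?_ fun j hj hne => ?_
  · rw [hym]
    exact zpow_le_one_of_nonpos₀ one_le_two (by omega)
  · have := Nat.padicValNat_two_lt_of_lt_two_pow_succ (by simp at hj; omega)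
      ((mem_Ico.mp hj).2.trans_le hb) hne
    rw [hy j hj, hym]
    exact zpow_lt_zpow_right₀ one_lt_two (by omega)

theorem stmt_11_general (e ℓ : ℕ) (hℓ : 1 ≤ ℓ) (h : 2 * ℓ < 2 ^ (e - 1)) :
    ((((2 ^ e + 4 * ℓ + 1).choose (2 * ℓ) : ℚ))⁻¹ - (((4 * ℓ + 1).choose (2 * ℓ) : ℚ))⁻¹) ≠ 0 ∧
      padicValRat 2
          ((((2 ^ e + 4 * ℓ + 1).choose (2 * ℓ) : ℚ))⁻¹ - (((4 * ℓ + 1).choose (2 * ℓ) : ℚ))⁻¹) =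
        (e : ℤ) - ((Nat.digits 2 ℓ).count 1 : ℤ) - (Nat.log 2 ℓ : ℤ) - 2 := by
  obtain ⟨hm_lo, hm_hi, hm_succ⟩ := Nat.two_pow_log_add_two_bounds (n := ℓ) (by omega)
  have hme : Nat.log 2 ℓ + 2 < e - 1 + 1 :=
    (Nat.pow_lt_pow_iff_right one_lt_two).mp (by rw [pow_succ 2 (e - 1)]; omega)
  set R := ∏ j ∈ Ico (2 * ℓ + 2) (4 * ℓ + 2), (1 + (2 : ℚ) ^ e / j)
  have hR1 : padicNorm 2 (R - 1) = 2 ^ ((Nat.log 2 ℓ + 2 : ℕ) - e : ℤ) :=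
    padicNorm_two_prod_Ico_one_add_two_pow_div_sub_one (by omega) hm_lo (by omega) hm_succ (by omega)
  have hR : padicNorm 2 R = 1 := padicNorm.eq_one_of_sub_one_lt_one <| by
    rw [hR1]
    exact zpow_lt_one_of_neg₀ one_lt_two (by omega)
  have hR0 : R ≠ 0 := fun h0 => by simp [h0] at hR
  have hAB : ((2 ^ e + 4 * ℓ + 1).choose (2 * ℓ) : ℚ) = (4 * ℓ + 1).choose (2 * ℓ) * R := by
    have := Nat.cast_choose_add_eq_mul_prod_s11 (2 ^ e) (2 * ℓ + 1) (2 * ℓ)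
    simp only [show 2 ^ e + (2 * ℓ + 1) + 2 * ℓ = 2 ^ e + 4 * ℓ + 1 by ring,
      show 2 * ℓ + 1 + 2 * ℓ = 4 * ℓ + 1 by ring, show 4 * ℓ + 1 + 1 = 4 * ℓ + 2 by ring] at this
    simpa [R] using this
  have hB0 : ((4 * ℓ + 1).choose (2 * ℓ) : ℚ) ≠ 0 := by
    exact_mod_cast (Nat.choose_pos (by omega)).ne'
  have hT : ((2 ^ e + 4 * ℓ + 1).choose (2 * ℓ) : ℚ)⁻¹ - ((4 * ℓ + 1).choose (2 * ℓ) : ℚ)⁻¹ =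
      -(R - 1) / ((4 * ℓ + 1).choose (2 * ℓ) * R) := by
    rw [hAB]
    field_simp
    ring
  apply padicNorm.padicValRat_eq_of_padicNorm_eq
  rw [hT, padicNorm.div, padicNorm.neg, padicNorm.mul, hR1, hR,
    padicNorm_two_choose_four_mul_add_one_two_mul, mul_one,
    ← zpow_sub₀ two_ne_zero]
  push_cast
  ring_nf

/-- For e ≥ 1, ℓ ≥ 1 with 2ℓ < 2^(e−1): T = C(2^e+4ℓ+1, 2ℓ)⁻¹ − C(4ℓ+1, 2ℓ)⁻¹ is
nonzero and ν(T) = e − α(ℓ) − lg(ℓ) − 2. -/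
theorem stmt_11 (e ℓ : ℕ) (he : 1 ≤ e) (hℓ : 1 ≤ ℓ) (h : 2 * ℓ < 2 ^ (e - 1)) :
    ((((2 ^ e + 4 * ℓ + 1).choose (2 * ℓ) : ℚ))⁻¹ - (((4 * ℓ + 1).choose (2 * ℓ) : ℚ))⁻¹) ≠ 0 ∧
      padicValRat 2
          ((((2 ^ e + 4 * ℓ + 1).choose (2 * ℓ) : ℚ))⁻¹ - (((4 * ℓ + 1).choose (2 * ℓ) : ℚ))⁻¹) =
        (e : ℤ) - ((Nat.digits 2 ℓ).count 1 : ℤ) - (Nat.log 2 ℓ : ℤ) - 2 :=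
  stmt_11_general e ℓ hℓ h
end
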